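/- arXiv:math/0609529 — 2 statements merged into one kernel-verified Lean document; each statement's English description precedes it below -/
import Mathlib

section
/- Let K_xy ⊂ ℝ^{n+m} and K_yz ⊂ ℝ^{m+p} be compact, and assume K has nonempty interior. Suppose there exist scalars N, N' ∈ ℝ such that N − ‖(X,Y)‖² ∈ Q(g) and N' − ‖(Y,Z)‖² ∈ Q(h). If f ∈ ℝ[X,Y] + ℝ[Y,Z] and f(x,y,z) > 0 for all (x,y,z) ∈ K, then f ∈ Q(g) + Q(h), i.e. f = σ + ψ for some σ ∈ Q(g) and ψ ∈ Q(h). -/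
open MvPolynomial

/-- A polynomial is a sum of squares. -/
def IsSOS {ι : Type*} (q : MvPolynomial ι ℝ) : Prop :=
  ∃ (k : ℕ) (s : Fin k → MvPolynomial ι ℝ), q = ∑ i, (s i) ^ 2

/-- Membership in the preordering generated by a finite family `g`:
`σ = Σ_{J ⊆ I} σ_J ∏_{j ∈ J} g_j` with each `σ_J` a sum of squares. -/
def InPreordering {ι κ : Type*} [Fintype κ] [DecidableEq κ]
    (g : κ → MvPolynomial ι ℝ) (σ : MvPolynomial ι ℝ) : Prop :=
  ∃ c : Finset κ → MvPolynomial ι ℝ,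
    (∀ J, IsSOS (c J)) ∧ σ = ∑ J : Finset κ, c J * ∏ j ∈ J, g j

/-- Membership in the quadratic module generated by a finite family `g`:
`σ = σ₀ + Σ_j σ_j g_j` with `σ₀` and each `σ_j` sums of squares. -/
def InQuadraticModule {ι κ : Type*} [Fintype κ]
    (g : κ → MvPolynomial ι ℝ) (σ : MvPolynomial ι ℝ) : Prop :=
  ∃ (c₀ : MvPolynomial ι ℝ) (c : κ → MvPolynomial ι ℝ),
    IsSOS c₀ ∧ (∀ j, IsSOS (c j)) ∧ σ = c₀ + ∑ j, c j * g j

namespace SP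

variable {ι κ : Type*} [Fintype κ] {g : κ → MvPolynomial ι ℝ}

lemma isSOS_zero : IsSOS (0 : MvPolynomial ι ℝ) := ⟨0, fun i => 0, by simp⟩

lemma isSOS_sq (p : MvPolynomial ι ℝ) : IsSOS (p ^ 2) := ⟨1, fun _ => p, by simp⟩

lemma isSOS_add {p q : MvPolynomial ι ℝ} (hp : IsSOS p) (hq : IsSOS q) : IsSOS (p + q) := by
  obtain ⟨k, s, rfl⟩ := hp; obtain ⟨l, t, rfl⟩ := hq
  exact ⟨k + l, Fin.append s t, by rw [Fin.sum_univ_add]; simp⟩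

lemma isSOS_const {c : ℝ} (hc : 0 ≤ c) : IsSOS (C c : MvPolynomial ι ℝ) :=
  ⟨1, fun _ => C (Real.sqrt c), by
    simp [← C_pow, ← C_mul, sq, Real.mul_self_sqrt hc]⟩

lemma isSOS_sq_mul (p : MvPolynomial ι ℝ) {s : MvPolynomial ι ℝ} (hs : IsSOS s) :
    IsSOS (p ^ 2 * s) := by
  obtain ⟨k, t, rfl⟩ := hs
  exact ⟨k, fun i => p * t i, by rw [Finset.mul_sum]; congr 1; ext i; ring⟩

lemma isSOS_smul {c : ℝ} (hc : 0 ≤ c) {s : MvPolynomial ι ℝ} (hs : IsSOS s) :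
    IsSOS (C c * s) := by
  have : (C c : MvPolynomial ι ℝ) = (C (Real.sqrt c)) ^ 2 := by
    rw [← C_pow, sq, Real.mul_self_sqrt hc]
  rw [this]; exact isSOS_sq_mul _ hs

lemma isSOS_eval_nonneg {s : MvPolynomial ι ℝ} (hs : IsSOS s) (x : ι → ℝ) :
    0 ≤ eval x s := by
  obtain ⟨k, t, rfl⟩ := hs
  rw [map_sum]
  exact Finset.sum_nonneg fun i _ => by rw [map_pow]; positivity

lemma isSOS_sum {α : Type*} {t : Finset α} {f : α → MvPolynomial ι ℝ}
    (h : ∀ i ∈ t, IsSOS (f i)) : IsSOS (∑ i ∈ t, f i) := by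
  classical
  induction t using Finset.induction_on with
  | empty => simpa using isSOS_zero
  | insert _ _ hx ih =>
    rw [Finset.sum_insert hx]
    exact isSOS_add (h _ (Finset.mem_insert_self _ _))
      (ih fun i hi => h i (Finset.mem_insert_of_mem hi))

lemma qm_of_isSOS {s : MvPolynomial ι ℝ} (hs : IsSOS s) : InQuadraticModule g s :=
  ⟨s, fun _ => 0, hs, fun _ => isSOS_zero, by simp⟩

lemma qm_zero : InQuadraticModule g 0 := qm_of_isSOS isSOS_zero

lemma qm_add {a b : MvPolynomial ι ℝ} (ha : InQuadraticModule g a) (hb : InQuadraticModule g b) :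
    InQuadraticModule g (a + b) := by
  obtain ⟨c₀, c, hc₀, hc, rfl⟩ := ha
  obtain ⟨d₀, d, hd₀, hd, rfl⟩ := hb
  refine ⟨c₀ + d₀, fun j => c j + d j, isSOS_add hc₀ hd₀,
    fun j => isSOS_add (hc j) (hd j), ?_⟩
  simp only [add_mul]
  rw [Finset.sum_add_distrib]
  abel

lemma qm_sq_mul (p : MvPolynomial ι ℝ) {a : MvPolynomial ι ℝ} (ha : InQuadraticModule g a) :
    InQuadraticModule g (p ^ 2 * a) := by
  obtain ⟨c₀, c, hc₀, hc, rfl⟩ := ha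
  refine ⟨p ^ 2 * c₀, fun j => p ^ 2 * c j, isSOS_sq_mul _ hc₀,
    fun j => isSOS_sq_mul _ (hc j), ?_⟩
  rw [mul_add, Finset.mul_sum]
  congr 1
  apply Finset.sum_congr rfl
  intro j _
  ring

lemma qm_smul {c : ℝ} (hc : 0 ≤ c) {a : MvPolynomial ι ℝ} (ha : InQuadraticModule g a) :
    InQuadraticModule g (C c * a) := by
  have : (C c : MvPolynomial ι ℝ) = (C (Real.sqrt c)) ^ 2 := by
    rw [← C_pow, sq, Real.mul_self_sqrt hc]
  rw [this]; exact qm_sq_mul _ ha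

lemma qm_const {c : ℝ} (hc : 0 ≤ c) : InQuadraticModule g (C c) :=
  qm_of_isSOS (isSOS_const hc)

lemma qm_gen (j : κ) : InQuadraticModule g (g j) := by
  classical
  refine ⟨0, fun k => if k = j then 1 else 0, isSOS_zero, fun k => ?_, ?_⟩
  · by_cases h : k = j <;> simp [h, isSOS_zero]
    exact ⟨1, fun _ => 1, by simp⟩
  · simp [Finset.sum_ite_eq', ite_mul]

lemma qm_eval_nonneg {a : MvPolynomial ι ℝ} (ha : InQuadraticModule g a)
    {x : ι → ℝ} (hx : ∀ j, 0 ≤ eval x (g j)) : 0 ≤ eval x a := by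
  obtain ⟨c₀, c, hc₀, hc, rfl⟩ := ha
  rw [map_add, map_sum]
  have h1 : 0 ≤ eval x c₀ := isSOS_eval_nonneg hc₀ x
  have h2 : ∀ j ∈ Finset.univ, (0:ℝ) ≤ eval x (c j * g j) := fun j _ => by
    rw [map_mul]; exact mul_nonneg (isSOS_eval_nonneg (hc j) x) (hx j)
  exact add_nonneg h1 (Finset.sum_nonneg h2)

/- ### Archimedean boundedness -/

def Bdd (g : κ → MvPolynomial ι ℝ) (p : MvPolynomial ι ℝ) : Prop :=
  ∃ N : ℝ, 0 < N ∧ InQuadraticModule g (C N - p) ∧ InQuadraticModule g (C N + p)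

lemma bdd_const (c : ℝ) : Bdd g (C c) := by
  refine ⟨|c| + 1, by positivity, ?_, ?_⟩
  · rw [← map_sub]
    exact qm_const (by cases abs_cases c <;> linarith)
  · rw [← map_add]
    exact qm_const (by cases abs_cases c <;> linarith)

lemma bdd_add {p q : MvPolynomial ι ℝ} (hp : Bdd g p) (hq : Bdd g q) : Bdd g (p + q) := by
  obtain ⟨N, hN, h1, h2⟩ := hp; obtain ⟨M, hM, h3, h4⟩ := hq
  refine ⟨N + M, by linarith, ?_, ?_⟩
  · rw [show (C (N+M) : MvPolynomial ι ℝ) - (p + q) = (C N - p) + (C M - q) by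
      rw [map_add]; ring]
    exact qm_add h1 h3
  · rw [show (C (N+M) : MvPolynomial ι ℝ) + (p + q) = (C N + p) + (C M + q) by
      rw [map_add]; ring]
    exact qm_add h2 h4

lemma bdd_neg {p : MvPolynomial ι ℝ} (hp : Bdd g p) : Bdd g (-p) := by
  obtain ⟨N, hN, h1, h2⟩ := hp
  exact ⟨N, hN, by rwa [sub_neg_eq_add], by rwa [← sub_eq_add_neg]⟩

lemma bdd_smul_nonneg {c : ℝ} (hc : 0 ≤ c) {p : MvPolynomial ι ℝ} (hp : Bdd g p) :
    Bdd g (C c * p) := by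
  obtain ⟨N, hN, h1, h2⟩ := hp
  refine ⟨c * N + 1, by positivity, ?_, ?_⟩
  · rw [show (C (c*N+1) : MvPolynomial ι ℝ) - C c * p = C c * (C N - p) + C 1 by
      rw [map_add, map_mul]; ring]
    exact qm_add (qm_smul hc h1) (qm_const zero_le_one)
  · rw [show (C (c*N+1) : MvPolynomial ι ℝ) + C c * p = C c * (C N + p) + C 1 by
      rw [map_add, map_mul]; ring]
    exact qm_add (qm_smul hc h2) (qm_const zero_le_one)

lemma bdd_smul (c : ℝ) {p : MvPolynomial ι ℝ} (hp : Bdd g p) : Bdd g (C c * p) := by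
  rcases le_or_gt 0 c with hc | hc
  · exact bdd_smul_nonneg hc hp
  · have h := bdd_smul_nonneg (c := -c) (by linarith) (bdd_neg hp)
    rw [show (C (-c) : MvPolynomial ι ℝ) * -p = C c * p by rw [map_neg]; ring] at h
    exact h

lemma bdd_sq {p : MvPolynomial ι ℝ} (hp : Bdd g p) : Bdd g (p ^ 2) := by
  obtain ⟨N, hN, h1, h2⟩ := hp
  refine ⟨N ^ 2, by positivity, ?_, ?_⟩
  · have e0 : ((C N - p) ^ 2 * (C N + p) + (C N + p) ^ 2 * (C N - p) : MvPolynomial ι ℝ)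
        = C (2 * N) * (C (N ^ 2) - p ^ 2) := by
      rw [show (C (N^2) : MvPolynomial ι ℝ) = (C N)^2 by rw [← C_pow],
        show (C (2*N) : MvPolynomial ι ℝ) = 2 * C N by rw [C_mul, map_ofNat]]
      ring
    have e1 : (C (N ^ 2) : MvPolynomial ι ℝ) - p ^ 2
        = C (1 / (2 * N)) * ((C N - p) ^ 2 * (C N + p) + (C N + p) ^ 2 * (C N - p)) := by
      rw [e0, ← mul_assoc, ← C_mul, one_div, inv_mul_cancel₀ (by positivity), map_one, one_mul]
    rw [e1]
    exact qm_smul (by positivity) (qm_add (qm_sq_mul _ h2) (qm_sq_mul _ h1))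
  · exact qm_of_isSOS (isSOS_add (isSOS_const (by positivity)) (isSOS_sq p))

lemma bdd_congr {p q : MvPolynomial ι ℝ} (hp : Bdd g p) (h : p = q) : Bdd g q := h ▸ hp

lemma bdd_mul {p q : MvPolynomial ι ℝ} (hp : Bdd g p) (hq : Bdd g q) : Bdd g (p * q) := by
  have h := bdd_smul (1/4)
    (bdd_add (bdd_sq (bdd_add hp hq)) (bdd_neg (bdd_sq (bdd_add hp (bdd_neg hq)))))
  refine bdd_congr h ?_
  rw [show ((p + q) ^ 2 + -((p + -q) ^ 2) : MvPolynomial ι ℝ) = 4 * (p * q) by ring,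
    ← mul_assoc,
    show (C (1/4 : ℝ) : MvPolynomial ι ℝ) * 4 = 1 by
      rw [← map_ofNat (C : ℝ →+* MvPolynomial ι ℝ) 4, ← C_mul]; norm_num,
    one_mul]

lemma bdd_all [Fintype ι] {N : ℝ} (hN : InQuadraticModule g (C N - ∑ v, X v ^ 2)) (hN0 : 0 ≤ N) :
    ∀ p : MvPolynomial ι ℝ, Bdd g p := by
  classical
  have bddXsq : ∀ i : ι, InQuadraticModule g (C (N+1) - X i ^ 2) := by
    intro i
    rw [show (C (N+1) : MvPolynomial ι ℝ) - X i ^ 2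
        = (C N - ∑ v, X v ^ 2) + (∑ v ∈ Finset.univ.erase i, X v ^ 2) + C 1 by
      rw [map_add, ← Finset.sum_erase_add _ _ (Finset.mem_univ i)]; ring]
    exact qm_add (qm_add hN (qm_of_isSOS (isSOS_sum fun v _ => isSOS_sq _)))
      (qm_const zero_le_one)
  have hu : (C (1/2 : ℝ) : MvPolynomial ι ℝ) * 2 = 1 := by
    rw [← map_ofNat (C : ℝ →+* MvPolynomial ι ℝ) 2, ← C_mul]; norm_num
  have hc2 : (C ((N+2)/2 : ℝ) : MvPolynomial ι ℝ) = C (1/2) * C (N+1) + C (1/2) := by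
    rw [← C_mul, ← C_add]; congr 1; ring
  have bddX : ∀ i : ι, Bdd g (X i) := by
    intro i
    refine ⟨(N + 2) / 2, by linarith, ?_, ?_⟩
    · rw [show (C ((N+2)/2) : MvPolynomial ι ℝ) - X i
          = C (1/2) * ((C (N+1) - X i ^ 2) + (X i - 1) ^ 2) by
        rw [hc2]; linear_combination (X i : MvPolynomial ι ℝ) * hu]
      exact qm_smul (by norm_num) (qm_add (bddXsq i) (qm_of_isSOS (isSOS_sq _)))
    · rw [show (C ((N+2)/2) : MvPolynomial ι ℝ) + X i
          = C (1/2) * ((C (N+1) - X i ^ 2) + (X i + 1) ^ 2) by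
        rw [hc2]; linear_combination (-(X i) : MvPolynomial ι ℝ) * hu]
      exact qm_smul (by norm_num) (qm_add (bddXsq i) (qm_of_isSOS (isSOS_sq _)))
  intro f
  induction f using MvPolynomial.induction_on with
  | C a => exact bdd_const a
  | add p q hp hq => exact bdd_add hp hq
  | mul_X p i hp => exact bdd_mul hp (bddX i)


/- ### Separating state via Riesz extension -/

lemma exists_state (hb : ∀ p : MvPolynomial ι ℝ, Bdd g p)
    {x₀ : ι → ℝ} (hx₀ : ∀ j, 0 ≤ eval x₀ (g j))
    {f : MvPolynomial ι ℝ} (hf : ¬ InQuadraticModule g f) :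
    ∃ L : MvPolynomial ι ℝ →ₗ[ℝ] ℝ,
      (∀ a, InQuadraticModule g a → 0 ≤ L a) ∧ L 1 = 1 ∧ L f ≤ 0 := by
  classical
  let Q : ConvexCone ℝ (MvPolynomial ι ℝ) :=
    { carrier := {u | ∃ (a : MvPolynomial ι ℝ) (t : ℝ), InQuadraticModule g a ∧ 0 ≤ t ∧ u = a - t • f}
      smul_mem' := by
        rintro c hc u ⟨a, t, ha, ht, rfl⟩
        refine ⟨C c * a, c * t, qm_smul hc.le ha, by positivity, ?_⟩
        rw [smul_sub, smul_smul, smul_eq_C_mul]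
      add_mem' := by
        rintro u ⟨a, t, ha, ht, rfl⟩ v ⟨b, s, hb', hs, rfl⟩
        refine ⟨a + b, t + s, qm_add ha hb', by positivity, by rw [add_smul]; ring⟩ }
  have hQmem : ∀ a : MvPolynomial ι ℝ, InQuadraticModule g a → a ∈ Q := by
    intro a ha
    exact ⟨a, 0, ha, le_refl 0, by simp⟩
  obtain ⟨L, hL1, hL2⟩ := riesz_extension (Q.toPointedCone ⟨0, 0, qm_zero, le_refl 0, by simp⟩)
    (LinearPMap.mkSpanSingleton (1 : MvPolynomial ι ℝ) (1 : ℝ) one_ne_zero)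
    (by
      rintro ⟨x, hx⟩ hxQ
      rcases Submodule.mem_span_singleton.1 hx with ⟨c, rfl⟩
      have hval : LinearPMap.mkSpanSingleton (1 : MvPolynomial ι ℝ) (1 : ℝ) one_ne_zero
          ⟨c • 1, hx⟩ = c • (1:ℝ) := LinearPMap.mkSpanSingleton'_apply _ _ _ c hx
      suffices hcpos : 0 ≤ c by rw [hval, smul_eq_mul, mul_one]; exact hcpos
      by_contra hc
      push_neg at hc
      obtain ⟨a, t, ha, ht, he⟩ := hxQ
      have hc1 : (c • (1 : MvPolynomial ι ℝ)) = C c := by rw [smul_eq_C_mul, mul_one]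
      have he' : C c = a - C t * f := by
        rw [← hc1, ← smul_eq_C_mul]; exact he
      clear he
      rename' he' => he
      rcases eq_or_lt_of_le ht with ht0 | ht0
      · have ha' : a = C c := by rw [he, ← ht0]; simp
        have h0 := qm_eval_nonneg (ha' ▸ ha) hx₀
        rw [eval_C] at h0; linarith
      · apply hf
        have hti : (C t⁻¹ : MvPolynomial ι ℝ) * C t = 1 := by
          rw [← C_mul, inv_mul_cancel₀ (ne_of_gt ht0), C_1]
        have hfe : f = C t⁻¹ * (a + C (-c)) := by
          rw [map_neg]
          linear_combination (C t⁻¹ : MvPolynomial ι ℝ) * he + (-f) * hti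
        rw [hfe]
        exact qm_smul (by positivity) (qm_add ha (qm_const (by linarith))))
    (by
      intro y
      obtain ⟨Nv, hN, h1, h2⟩ := hb y
      refine ⟨⟨Nv • 1, Submodule.mem_span_singleton.2 ⟨Nv, rfl⟩⟩, ?_⟩
      show Nv • (1 : MvPolynomial ι ℝ) + y ∈ Q
      rw [smul_eq_C_mul, mul_one]
      exact hQmem _ h2)
  refine ⟨L, fun a ha => hL2 a (hQmem a ha), ?_, ?_⟩
  · have := hL1 ⟨1, Submodule.mem_span_singleton_self 1⟩
    rw [LinearPMap.mkSpanSingleton_apply] at this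
    exact this
  · have h0 : (-f) ∈ Q := ⟨0, 1, qm_zero, zero_le_one, by simp⟩
    have := hL2 (-f) h0
    rw [map_neg] at this
    linarith

/- ### The state space -/

def States (g : κ → MvPolynomial ι ℝ) : Set (MvPolynomial ι ℝ → ℝ) :=
  {L | IsLinearMap ℝ L ∧ (∀ a, InQuadraticModule g a → 0 ≤ L a) ∧ L 1 = 1}

lemma states_constmul {L : MvPolynomial ι ℝ → ℝ} (hL : IsLinearMap ℝ L) (c : ℝ)
    (p : MvPolynomial ι ℝ) : L (C c * p) = c * L p := by
  rw [← smul_eq_C_mul, hL.map_smul, smul_eq_mul]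

lemma states_C {L : MvPolynomial ι ℝ → ℝ} (hL : L ∈ States g) (c : ℝ) : L (C c) = c := by
  have h := states_constmul hL.1 c 1
  rw [mul_one, hL.2.2, mul_one] at h
  exact h

lemma states_le {L : MvPolynomial ι ℝ → ℝ} (hL : L ∈ States g) {p : MvPolynomial ι ℝ} {M : ℝ}
    (h : InQuadraticModule g (C M - p)) : L p ≤ M := by
  have h0 := hL.2.1 _ h
  rw [hL.1.map_sub, states_C hL] at h0
  linarith

lemma states_ge {L : MvPolynomial ι ℝ → ℝ} (hL : L ∈ States g) {p : MvPolynomial ι ℝ} {M : ℝ}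
    (h : InQuadraticModule g (C M + p)) : -M ≤ L p := by
  have h0 := hL.2.1 _ h
  rw [hL.1.map_add, states_C hL] at h0
  linarith

lemma states_isClosed : IsClosed (States g) := by
  have he : States g =
      {L : MvPolynomial ι ℝ → ℝ | ∀ p q : MvPolynomial ι ℝ, L (p + q) = L p + L q} ∩
      ({L : MvPolynomial ι ℝ → ℝ | ∀ (c : ℝ) (p : MvPolynomial ι ℝ), L (c • p) = c • L p} ∩
      ({L : MvPolynomial ι ℝ → ℝ |
          ∀ a : {a : MvPolynomial ι ℝ // InQuadraticModule g a}, 0 ≤ L a.1} ∩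
       {L : MvPolynomial ι ℝ → ℝ | L 1 = 1})) := by
    ext L
    simp only [Set.mem_inter_iff, Set.mem_setOf_eq, States]
    constructor
    · rintro ⟨hlin, hpos, h1⟩
      exact ⟨hlin.map_add, hlin.map_smul, fun a => hpos a.1 a.2, h1⟩
    · rintro ⟨hadd, hsmul, hpos, h1⟩
      exact ⟨⟨hadd, hsmul⟩, fun a ha => hpos ⟨a, ha⟩, h1⟩
  rw [he]
  refine IsClosed.inter ?_ (IsClosed.inter ?_ (IsClosed.inter ?_ ?_))
  · rw [Set.setOf_forall]
    refine isClosed_iInter fun p => ?_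
    rw [Set.setOf_forall]
    refine isClosed_iInter fun q => ?_
    exact isClosed_eq (continuous_apply (p + q)) ((continuous_apply p).add (continuous_apply q))
  · rw [Set.setOf_forall]
    refine isClosed_iInter fun c => ?_
    rw [Set.setOf_forall]
    refine isClosed_iInter fun p => ?_
    exact isClosed_eq (continuous_apply _) ((continuous_apply _).const_smul c)
  · rw [Set.setOf_forall]
    exact isClosed_iInter fun a => isClosed_le continuous_const (continuous_apply _)
  · exact isClosed_eq (continuous_apply _) continuous_const

lemma states_isCompact (hb : ∀ p : MvPolynomial ι ℝ, Bdd g p) : IsCompact (States g) := by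
  classical
  choose B hB0 hB1 hB2 using hb
  refine IsCompact.of_isClosed_subset
    (isCompact_univ_pi (s := fun p : MvPolynomial ι ℝ => Set.Icc (-(B p)) (B p))
      fun p => isCompact_Icc) states_isClosed ?_
  intro L hL
  rw [Set.mem_univ_pi]
  intro p
  exact ⟨states_ge hL (hB2 p), states_le hL (hB1 p)⟩

lemma states_convex : Convex ℝ (States g) := by
  rintro L1 ⟨hl1, hp1, ho1⟩ L2 ⟨hl2, hp2, ho2⟩ a b ha hb hab
  refine ⟨?_, ?_, ?_⟩
  · constructor
    · intro p q
      simp only [Pi.add_apply, Pi.smul_apply, hl1.map_add, hl2.map_add, smul_eq_mul]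
      ring
    · intro c p
      simp only [Pi.add_apply, Pi.smul_apply, hl1.map_smul, hl2.map_smul, smul_eq_mul]
      ring
  · intro q hq
    have h1 := hp1 q hq
    have h2 := hp2 q hq
    simp only [Pi.add_apply, Pi.smul_apply, smul_eq_mul]
    have := mul_nonneg ha h1
    have := mul_nonneg hb h2
    linarith
  · simp only [Pi.add_apply, Pi.smul_apply, ho1, ho2, smul_eq_mul]
    linarith

/- ### Extreme states are multiplicative -/

lemma states_pow_le {L : MvPolynomial ι ℝ → ℝ} (hL : L ∈ States g) {h : MvPolynomial ι ℝ}
    {l : ℝ} (hl : 0 ≤ l) (hQ : InQuadraticModule g (C (l^2) - h^2)) :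
    ∀ k : ℕ, L (h ^ (2*k)) ≤ l ^ (2*k) := by
  intro k
  induction k with
  | zero => simp [hL.2.2]
  | succ k ih =>
    have hq : InQuadraticModule g ((h^k)^2 * (C (l^2) - h^2)) := qm_sq_mul _ hQ
    have he : (h^k)^2 * (C (l^2) - h^2) = C (l^2) * h^(2*k) - h^(2*(k+1)) := by ring
    rw [he] at hq
    have h0 := hL.2.1 _ hq
    rw [hL.1.map_sub, states_constmul hL.1] at h0
    have hmono : l^2 * L (h^(2*k)) ≤ l^2 * l^(2*k) := mul_le_mul_of_nonneg_left ih (by positivity)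
    calc L (h^(2*(k+1))) ≤ l^2 * L (h^(2*k)) := by linarith
    _ ≤ l^2 * l^(2*k) := hmono
    _ = l^(2*(k+1)) := by ring

lemma key_nonneg (hb : ∀ p : MvPolynomial ι ℝ, Bdd g p) {L : MvPolynomial ι ℝ → ℝ}
    (hL : L ∈ States g) {h : MvPolynomial ι ℝ} {l : ℝ} (hl0 : 0 ≤ l) (hl1 : l < 1)
    (hQ : InQuadraticModule g (C (l^2) - h^2)) {p : MvPolynomial ι ℝ}
    (hp : InQuadraticModule g p) : 0 ≤ L ((1 - h^2) * p) := by
  obtain ⟨M, hM0, hM1, hM2⟩ := hb ((1 - h^2) * p)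
  have hbound : ∀ K : ℕ, -(M * l^(2*K)) ≤ L ((1 - h^2) * p) := by
    intro K
    have gs := geom_sum_mul (h^2) K
    have e1 : ((1 - h^2) * p : MvPolynomial ι ℝ)
        = (∑ k ∈ Finset.range K, (h^k * (1 - h^2))^2 * p) + h^(2*K) * ((1 - h^2) * p) := by
      have e2 : ∑ k ∈ Finset.range K, ((h^k * (1 - h^2))^2 * p : MvPolynomial ι ℝ)
          = (∑ k ∈ Finset.range K, (h^2)^k) * ((1 - h^2)^2 * p) := by
        rw [Finset.sum_mul]
        apply Finset.sum_congr rfl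
        intro k _
        ring
      rw [e2, show (h:MvPolynomial ι ℝ)^(2*K) = (h^2)^K by rw [pow_mul]]
      linear_combination ((1 - h^2) * p : MvPolynomial ι ℝ) * gs
    have e3 := congrArg (IsLinearMap.mk' L hL.1) e1
    rw [map_add, map_sum] at e3
    have hterm : ∀ k ∈ Finset.range K,
        (0:ℝ) ≤ (IsLinearMap.mk' L hL.1) ((h^k * (1 - h^2))^2 * p) :=
      fun k _ => hL.2.1 _ (qm_sq_mul _ hp)
    have hsum : (0:ℝ) ≤ ∑ k ∈ Finset.range K,
        (IsLinearMap.mk' L hL.1) ((h^k * (1 - h^2))^2 * p) := Finset.sum_nonneg hterm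
    have hrest : -(M * l^(2*K)) ≤ L (h^(2*K) * ((1 - h^2) * p)) := by
      have hq1 : InQuadraticModule g ((h^K)^2 * (C M + (1-h^2)*p)) := qm_sq_mul _ hM2
      have heq : (h^K)^2 * (C M + (1-h^2)*p)
          = C M * h^(2*K) + h^(2*K) * ((1-h^2)*p) := by ring
      rw [heq] at hq1
      have h1 := hL.2.1 _ hq1
      rw [hL.1.map_add, states_constmul hL.1] at h1
      have h2 : L (h^(2*K)) ≤ l^(2*K) := states_pow_le hL hl0 hQ K
      have h3 : M * L (h^(2*K)) ≤ M * l^(2*K) := mul_le_mul_of_nonneg_left h2 hM0.le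
      linarith
    have e4 : L ((1 - h^2) * p) = (∑ k ∈ Finset.range K,
        (IsLinearMap.mk' L hL.1) ((h^k * (1 - h^2))^2 * p))
        + L (h^(2*K) * ((1 - h^2) * p)) := e3
    linarith
  have htend : Filter.Tendsto (fun K : ℕ => -(M * l^(2*K))) Filter.atTop (nhds 0) := by
    have h4 : Filter.Tendsto (fun K : ℕ => (l^2)^K) Filter.atTop (nhds 0) :=
      tendsto_pow_atTop_nhds_zero_of_lt_one (by positivity) (by nlinarith)
    have h5 := (h4.const_mul M).neg
    simp only [mul_zero, neg_zero] at h5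
    convert h5 using 2 with K
    rw [pow_mul]
  exact le_of_tendsto htend (Filter.Eventually.of_forall hbound)

lemma extreme_mul_sq (hb : ∀ p : MvPolynomial ι ℝ, Bdd g p) {L : MvPolynomial ι ℝ → ℝ}
    (hLex : L ∈ (States g).extremePoints ℝ) {h : MvPolynomial ι ℝ} {l : ℝ}
    (hl0 : 0 ≤ l) (hl1 : l < 1) (hQ : InQuadraticModule g (C (l^2) - h^2)) :
    ∀ p, L (h^2 * p) = L (h^2) * L p := by
  obtain ⟨hL, hext⟩ := hLex
  have hs0 : 0 ≤ L (h^2) := hL.2.1 _ (qm_of_isSOS (isSOS_sq h))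
  have hs1 : L (h^2) ≤ l^2 := states_le hL hQ
  have hslt : L (h^2) < 1 := lt_of_le_of_lt hs1 (by nlinarith)
  rcases eq_or_lt_of_le hs0 with hs0' | hs0'
  · intro p
    obtain ⟨M, hM0, hM1, hM2⟩ := hb p
    have k1 : InQuadraticModule g (h^2 * (C M - p)) := qm_sq_mul _ hM1
    have k2 : InQuadraticModule g (h^2 * (C M + p)) := qm_sq_mul _ hM2
    rw [show (h^2 * (C M - p) : MvPolynomial ι ℝ) = C M * h^2 - h^2 * p by ring] at k1
    rw [show (h^2 * (C M + p) : MvPolynomial ι ℝ) = C M * h^2 + h^2 * p by ring] at k2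
    have e1 := hL.2.1 _ k1
    have e2 := hL.2.1 _ k2
    rw [hL.1.map_sub, states_constmul hL.1] at e1
    rw [hL.1.map_add, states_constmul hL.1] at e2
    rw [← hs0', mul_zero, zero_sub] at e1
    rw [← hs0', mul_zero, zero_add] at e2
    rw [← hs0', zero_mul]
    linarith
  · set s := L (h^2) with hs
    have h1s : (1 - s : ℝ) ≠ 0 := by
      intro hcon; rw [sub_eq_zero] at hcon; exact (ne_of_lt hslt) hcon.symm
    set L₁ := fun p => L (h^2 * p) / s with hL₁def
    set L₂ := fun p => L ((1 - h^2) * p) / (1 - s) with hL₂def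
    have hL₁ : L₁ ∈ States g := by
      refine ⟨⟨fun p q => ?_, fun c p => ?_⟩, fun a ha => ?_, ?_⟩
      · simp only [hL₁def]
        rw [mul_add, hL.1.map_add]
        ring
      · simp only [hL₁def]
        rw [mul_smul_comm, hL.1.map_smul]
        simp only [smul_eq_mul]
        ring
      · exact div_nonneg (hL.2.1 _ (qm_sq_mul _ ha)) hs0
      · simp only [hL₁def]
        rw [mul_one]
        exact div_self (ne_of_gt hs0')
    have hL₂ : L₂ ∈ States g := by
      refine ⟨⟨fun p q => ?_, fun c p => ?_⟩, fun a ha => ?_, ?_⟩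
      · simp only [hL₂def]
        rw [mul_add, hL.1.map_add]
        ring
      · simp only [hL₂def]
        rw [mul_smul_comm, hL.1.map_smul]
        simp only [smul_eq_mul]
        ring
      · exact div_nonneg (key_nonneg hb hL hl0 hl1 hQ ha) (by linarith)
      · simp only [hL₂def]
        rw [mul_one, hL.1.map_sub, hL.2.2]
        exact div_self h1s
    have hseg : L ∈ openSegment ℝ L₁ L₂ := by
      refine ⟨s, 1 - s, hs0', by linarith, by ring, ?_⟩
      funext p
      simp only [Pi.add_apply, Pi.smul_apply, hL₁def, hL₂def, smul_eq_mul]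
      rw [mul_div_cancel₀ _ (ne_of_gt hs0'), mul_div_cancel₀ _ h1s]
      rw [← hL.1.map_add, show h^2 * p + (1 - h^2) * p = p by ring]
    have hres := hext hL₁ hL₂ hseg
    intro p
    have := congrFun hres p
    simp only [hL₁def] at this
    rw [div_eq_iff (ne_of_gt hs0')] at this
    rw [this]
    ring

lemma extreme_mul (hb : ∀ p : MvPolynomial ι ℝ, Bdd g p) {L : MvPolynomial ι ℝ → ℝ}
    (hLex : L ∈ (States g).extremePoints ℝ) :
    ∀ q p : MvPolynomial ι ℝ, L (q * p) = L q * L p := by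
  have hL := hLex.1
  have sq_mul : ∀ r p : MvPolynomial ι ℝ, L (r^2 * p) = L (r^2) * L p := by
    intro r p
    obtain ⟨M, hM0, hM1, _⟩ := hb (r^2)
    set u := Real.sqrt M with hu
    have hu0 : 0 < u := Real.sqrt_pos.2 hM0
    have hu2 : u^2 = M := Real.sq_sqrt hM0.le
    have hc : ((1/(2*u))^2 : ℝ) * M = (1/2)^2 := by
      rw [← hu2]; field_simp
    have he : (C ((1/2:ℝ)^2) : MvPolynomial ι ℝ) - (C (1/(2*u)) * r)^2
        = C ((1/(2*u))^2) * (C M - r^2) := by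
      rw [← hc, C_mul, C_pow]; ring
    have hQ : InQuadraticModule g (C ((1/2:ℝ)^2) - (C (1/(2*u)) * r)^2) := by
      rw [he]; exact qm_smul (by positivity) hM1
    have hmul := extreme_mul_sq hb hLex (by norm_num : (0:ℝ) ≤ 1/2) (by norm_num) hQ p
    have hexp : (C (1/(2*u)) * r : MvPolynomial ι ℝ)^2 = C ((1/(2*u))^2) * r^2 := by
      rw [mul_pow, C_pow]
    rw [hexp, mul_assoc, states_constmul hL.1, states_constmul hL.1] at hmul
    have he2 : ((1/(2*u))^2 : ℝ) ≠ 0 := by positivity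
    apply mul_left_cancel₀ he2
    rw [hmul]; ring
  intro q p
  have hu4 : (C (1/4 : ℝ) : MvPolynomial ι ℝ) * 4 = 1 := by
    rw [← map_ofNat (C : ℝ →+* MvPolynomial ι ℝ) 4, ← C_mul]; norm_num
  have key : ∀ p' : MvPolynomial ι ℝ,
      L (q * p') = 1/4 * (L ((q+1)^2 * p') - L ((q-1)^2 * p')) := by
    intro p'
    have e : q * p' = C (1/4) * ((q+1)^2 * p') - C (1/4) * ((q-1)^2 * p') := by
      linear_combination (-(q * p') : MvPolynomial ι ℝ) * hu4
    rw [e, hL.1.map_sub, states_constmul hL.1, states_constmul hL.1]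
    ring
  have hq1 := key p
  rw [sq_mul (q+1) p, sq_mul (q-1) p] at hq1
  have hq2 := key 1
  rw [mul_one, mul_one, mul_one] at hq2
  rw [hq1, hq2]
  ring

lemma states_eval {L : MvPolynomial ι ℝ → ℝ} (hL : L ∈ States g)
    (hmul : ∀ q p : MvPolynomial ι ℝ, L (q * p) = L q * L p) :
    ∀ p : MvPolynomial ι ℝ, L p = eval (fun i => L (X i)) p := by
  intro p
  induction p using MvPolynomial.induction_on with
  | C a => rw [eval_C, states_C hL]
  | add p q hp hq => rw [hL.1.map_add, map_add, hp, hq]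
  | mul_X p i hp => rw [hmul p (X i), map_mul, hp, eval_X]

/- ### Putinar's Positivstellensatz -/

theorem putinar {ι' κ' : Type*} [Fintype ι'] [Fintype κ'] (g' : κ' → MvPolynomial ι' ℝ) (N : ℝ)
    (hN : InQuadraticModule g' (C N - ∑ v, X v ^ 2))
    (x₀ : ι' → ℝ) (hx₀ : ∀ j, 0 ≤ eval x₀ (g' j))
    (f : MvPolynomial ι' ℝ) (hpos : ∀ x : ι' → ℝ, (∀ j, 0 ≤ eval x (g' j)) → 0 < eval x f) :
    InQuadraticModule g' f := by
  by_contra hf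
  have hN0 : 0 ≤ N := by
    have h0 := qm_eval_nonneg hN hx₀
    rw [map_sub, eval_C, map_sum] at h0
    have h1 : 0 ≤ ∑ v, eval x₀ (X v ^ 2) :=
      Finset.sum_nonneg fun v _ => by rw [map_pow]; positivity
    linarith
  have hb := bdd_all hN hN0
  obtain ⟨L₀, hL₀pos, hL₀1, hL₀f⟩ := exists_state hb hx₀ hf
  have hL₀S : ⇑L₀ ∈ States g' := ⟨⟨fun p q => by rw [map_add], fun c p => by rw [map_smul]⟩,
    hL₀pos, hL₀1⟩
  have hScomp := states_isCompact hb
  have hSne : (States g').Nonempty := ⟨L₀, hL₀S⟩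
  obtain ⟨Lm, hLmS, hmin⟩ := hScomp.exists_isMinOn hSne
    ((continuous_apply f).continuousOn)
  set T := States g' ∩ {L | L f = Lm f} with hT
  have hText : IsExtreme ℝ (States g') T := by
    constructor
    · exact Set.inter_subset_left
    · rintro L1 h1 L2 h2 Lx ⟨hxS, hxval⟩ hseg
      obtain ⟨a, b, ha, hb', hab, hsum⟩ := hseg
      have hv : a * L1 f + b * L2 f = Lm f := by
        have := congrFun hsum f
        simp only [Pi.add_apply, Pi.smul_apply, smul_eq_mul] at this
        rw [this]
        exact hxval
      have m1 : Lm f ≤ L1 f := isMinOn_iff.1 hmin _ h1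
      have m2 : Lm f ≤ L2 f := isMinOn_iff.1 hmin _ h2
      have q1 : a * Lm f ≤ a * L1 f := mul_le_mul_of_nonneg_left m1 ha.le
      have q2 : b * Lm f ≤ b * L2 f := mul_le_mul_of_nonneg_left m2 hb'.le
      have hq : a * Lm f + b * Lm f = Lm f := by rw [← add_mul, hab, one_mul]
      have e1' : a * L1 f = a * Lm f := by linarith
      have e2' : b * L2 f = b * Lm f := by linarith
      have e1 : L1 f = Lm f := mul_left_cancel₀ (ne_of_gt ha) e1'
      have e2 : L2 f = Lm f := mul_left_cancel₀ (ne_of_gt hb') e2'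
      exact ⟨h1, e1⟩
  have hTcomp : IsCompact T :=
    hScomp.inter_right (isClosed_eq (continuous_apply f) continuous_const)
  have hTne : T.Nonempty := ⟨Lm, hLmS, rfl⟩
  obtain ⟨Le, hLeT⟩ := hTcomp.extremePoints_nonempty hTne
  have hLeEx : Le ∈ (States g').extremePoints ℝ :=
    hText.extremePoints_subset_extremePoints hLeT
  have hLeS : Le ∈ States g' := hLeEx.1
  have hmul := extreme_mul hb hLeEx
  have heval := states_eval hLeS hmul
  have hx₁ : ∀ j, 0 ≤ eval (fun i => Le (X i)) (g' j) := fun j => by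
    rw [← heval]; exact hLeS.2.1 _ (qm_gen j)
  have hfpos : 0 < eval (fun i => Le (X i)) f := hpos _ hx₁
  rw [← heval] at hfpos
  have h5 : Le f = Lm f := hLeT.1.2
  have h6 : Lm f ≤ L₀ f := isMinOn_iff.1 hmin _ hL₀S
  linarith

/- ### Polynomial approximation via Stone-Weierstrass -/

lemma poly_approx {m : ℕ} {s : Set (Fin m → ℝ)} (hs : IsCompact s)
    (F : (Fin m → ℝ) → ℝ) (hF : ContinuousOn F s) {ε : ℝ} (hε : 0 < ε) :
    ∃ q : MvPolynomial (Fin m) ℝ, ∀ y ∈ s, |eval y q - F y| < ε := by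
  haveI : CompactSpace s := isCompact_iff_compactSpace.1 hs
  let Φ : MvPolynomial (Fin m) ℝ →ₐ[ℝ] C(s, ℝ) :=
    MvPolynomial.aeval (fun i => (⟨fun y => (y : Fin m → ℝ) i,
      (continuous_apply i).comp continuous_subtype_val⟩ : C(s, ℝ)))
  have heval : ∀ (p : MvPolynomial (Fin m) ℝ) (y : s),
      (Φ p) y = eval (y : Fin m → ℝ) p := by
    intro p
    induction p using MvPolynomial.induction_on with
    | C a =>
      intro y
      simp [Φ]
    | add p q hp hq =>
      intro y
      simp only [map_add, ContinuousMap.add_apply, hp, hq]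
    | mul_X p i hp =>
      intro y
      simp only [map_mul, ContinuousMap.mul_apply, hp, aeval_X, map_pow, eval_mul, eval_X, Φ]
      rfl
  have hsep : (Φ.range : Subalgebra ℝ C(s, ℝ)).SeparatesPoints := by
    intro y y' hyy'
    have hex : ∃ i, (y : Fin m → ℝ) i ≠ (y' : Fin m → ℝ) i := by
      by_contra hcon
      push_neg at hcon
      exact hyy' (Subtype.ext (funext hcon))
    obtain ⟨i, hi⟩ := hex
    refine ⟨⇑(Φ (X i)), ⟨Φ (X i), ⟨X i, rfl⟩, rfl⟩, ?_⟩
    rw [heval, heval, eval_X, eval_X]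
    exact hi
  obtain ⟨⟨G, hG⟩, hnear⟩ :=
    ContinuousMap.exists_mem_subalgebra_near_continuous_of_separatesPoints Φ.range hsep
      (s.restrict F) hF.restrict ε hε
  obtain ⟨q, rfl⟩ := hG
  refine ⟨q, fun y hy => ?_⟩
  have h2 := hnear ⟨y, hy⟩
  rw [Real.norm_eq_abs] at h2
  rw [← heval q ⟨y, hy⟩]
  exact h2

/- ### Fiberwise minimum: attainment and lower semicontinuity -/

lemma exists_fiber_min {W Y : Type*} [TopologicalSpace W] [TopologicalSpace Y] [T2Space Y]
    {K : Set W} (hK : IsCompact K) {φ : W → ℝ} (hφ : Continuous φ)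
    {π : W → Y} (hπ : Continuous π) :
    ∃ F : Y → ℝ,
      (∀ w ∈ K, F (π w) ≤ φ w) ∧
      (∀ y ∈ π '' K, ∃ w ∈ K, π w = y ∧ φ w = F y) ∧
      (∀ y₀ ∈ π '' K, ∀ δ : ℝ, 0 < δ →
        ∃ U : Set Y, IsOpen U ∧ y₀ ∈ U ∧ ∀ y ∈ U, y ∈ π '' K → F y₀ - δ < F y) := by
  classical
  set Fib : Y → Set W := fun y => K ∩ π ⁻¹' {y} with hFib
  have hFibComp : ∀ y, IsCompact (Fib y) :=
    fun y => hK.inter_right (IsClosed.preimage hπ isClosed_singleton)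
  set F : Y → ℝ := fun y => sInf (φ '' Fib y) with hF
  have hmin : ∀ y ∈ π '' K, ∃ w ∈ Fib y, φ w = F y ∧ ∀ w' ∈ Fib y, φ w ≤ φ w' := by
    rintro y ⟨w0, hw0, rfl⟩
    have hne : (Fib (π w0)).Nonempty := ⟨w0, hw0, rfl⟩
    obtain ⟨w, hw, hwmin⟩ := (hFibComp (π w0)).exists_isMinOn hne hφ.continuousOn
    refine ⟨w, hw, ?_, fun w' hw' => isMinOn_iff.1 hwmin _ hw'⟩
    have hls : IsLeast (φ '' Fib (π w0)) (φ w) :=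
      ⟨Set.mem_image_of_mem _ hw, by
        rintro v ⟨w', hw', rfl⟩
        exact isMinOn_iff.1 hwmin _ hw'⟩
    exact (hls.csInf_eq).symm
  have hlb : ∀ w ∈ K, F (π w) ≤ φ w := by
    intro w hw
    obtain ⟨wm, hwm, hFeq, hwmin⟩ := hmin (π w) ⟨w, hw, rfl⟩
    rw [← hFeq]
    exact hwmin w ⟨hw, rfl⟩
  refine ⟨F, hlb, ?_, ?_⟩
  · intro y hy
    obtain ⟨w, hw, hFeq, _⟩ := hmin y hy
    exact ⟨w, hw.1, hw.2, hFeq⟩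
  · intro y₀ hy₀ δ hδ
    set Cd : Set W := K ∩ φ ⁻¹' (Set.Iic (F y₀ - δ)) with hCd
    have hCdComp : IsCompact Cd := hK.inter_right (IsClosed.preimage hφ isClosed_Iic)
    have hPclosed : IsClosed (π '' Cd) := (hCdComp.image hπ).isClosed
    have hy₀P : y₀ ∉ π '' Cd := by
      rintro ⟨w, ⟨hwK, hwle⟩, rfl⟩
      have := hlb w hwK
      simp only [Set.mem_preimage, Set.mem_Iic] at hwle
      linarith
    refine ⟨(π '' Cd)ᶜ, hPclosed.isOpen_compl, hy₀P, ?_⟩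
    intro y hyU hyA
    obtain ⟨w, hw, hFeq, _⟩ := hmin y hyA
    by_contra hcon
    push_neg at hcon
    exact hyU ⟨w, ⟨hw.1, by simp only [Set.mem_preimage, Set.mem_Iic]; linarith⟩, hw.2⟩

/- ### Continuity of evaluation -/

lemma continuous_eval_elim {n m : ℕ} (f : MvPolynomial (Fin n ⊕ Fin m) ℝ) :
    Continuous fun w : (Fin n → ℝ) × (Fin m → ℝ) => eval (Sum.elim w.1 w.2) f := by
  have h1 : Continuous fun w : (Fin n → ℝ) × (Fin m → ℝ) => Sum.elim w.1 w.2 := by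
    refine continuous_pi fun v => ?_
    cases v with
    | inl i => exact (continuous_apply i).comp continuous_fst
    | inr j => exact (continuous_apply j).comp continuous_snd
  exact (MvPolynomial.continuous_eval f).comp h1

/- ### The separation lemma -/

lemma exists_sep {n m p' : ℕ} {Kxy : Set ((Fin n → ℝ) × (Fin m → ℝ))}
    {Kyz : Set ((Fin m → ℝ) × (Fin p' → ℝ))}
    (hc1 : IsCompact Kxy) (hc2 : IsCompact Kyz)
    (f₁ : MvPolynomial (Fin n ⊕ Fin m) ℝ) (f₂ : MvPolynomial (Fin m ⊕ Fin p') ℝ)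
    (hpos : ∀ w1 ∈ Kxy, ∀ w2 ∈ Kyz, w1.2 = w2.1 →
      0 < eval (Sum.elim w1.1 w1.2) f₁ + eval (Sum.elim w2.1 w2.2) f₂) :
    ∃ q : MvPolynomial (Fin m) ℝ,
      (∀ w ∈ Kxy, eval w.2 q < eval (Sum.elim w.1 w.2) f₁) ∧
      (∀ w ∈ Kyz, 0 < eval (Sum.elim w.1 w.2) f₂ + eval w.1 q) := by
  classical
  set φ₁ : (Fin n → ℝ) × (Fin m → ℝ) → ℝ := fun w => eval (Sum.elim w.1 w.2) f₁ with hφ₁def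
  set φ₂ : (Fin m → ℝ) × (Fin p' → ℝ) → ℝ := fun w => eval (Sum.elim w.1 w.2) f₂ with hφ₂def
  have hφ₁ : Continuous φ₁ := continuous_eval_elim f₁
  have hφ₂ : Continuous φ₂ := continuous_eval_elim f₂
  set A := Prod.snd '' Kxy with hA
  set B := Prod.fst '' Kyz with hB
  have hAcomp : IsCompact A := hc1.image continuous_snd
  have hBcomp : IsCompact B := hc2.image continuous_fst
  set K' := (Kxy ×ˢ Kyz) ∩ {w | w.1.2 = w.2.1} with hK'
  have hK'comp : IsCompact K' := (hc1.prod hc2).inter_right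
    (isClosed_eq (continuous_snd.comp continuous_fst) (continuous_fst.comp continuous_snd))
  obtain ⟨ε, hε0, hεK⟩ : ∃ ε : ℝ, 0 < ε ∧ ∀ w ∈ K', 3*ε ≤ φ₁ w.1 + φ₂ w.2 := by
    by_cases hne : K'.Nonempty
    · obtain ⟨w₀, hw₀, hmin⟩ := hK'comp.exists_isMinOn hne
        ((hφ₁.comp continuous_fst).add (hφ₂.comp continuous_snd)).continuousOn
      have hpos₀ : 0 < φ₁ w₀.1 + φ₂ w₀.2 := hpos w₀.1 hw₀.1.1 w₀.2 hw₀.1.2 hw₀.2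
      refine ⟨(φ₁ w₀.1 + φ₂ w₀.2)/3, by linarith, fun w hw => ?_⟩
      have hle := isMinOn_iff.1 hmin w hw
      simp only [Pi.add_apply, Function.comp_apply] at hle
      linarith
    · exact ⟨1, one_pos, fun w hw => absurd ⟨w, hw⟩ hne⟩
  obtain ⟨F₁, hF₁lb, hF₁att, hF₁lsc⟩ := exists_fiber_min hc1 hφ₁ continuous_snd
  obtain ⟨F₂, hF₂lb, hF₂att, hF₂lsc⟩ := exists_fiber_min hc2 hφ₂ continuous_fst
  have hsum : ∀ y, y ∈ A → y ∈ B → 3*ε ≤ F₁ y + F₂ y := by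
    intro y hyA hyB
    obtain ⟨w1, hw1K, hw1y, hw1F⟩ := hF₁att y hyA
    obtain ⟨w2, hw2K, hw2y, hw2F⟩ := hF₂att y hyB
    have hmem : (w1, w2) ∈ K' := ⟨⟨hw1K, hw2K⟩, by simp [hw1y, hw2y]⟩
    have hιne := hεK (w1, w2) hmem
    rw [← hw1F, ← hw2F]
    exact hιne
  have hloc : ∀ y₀ : Fin m → ℝ, ∃ r : ℝ, 0 < r ∧ ∃ c : ℝ,
      (y₀ ∈ A ∪ B → ((∀ y, y ∈ Metric.ball y₀ r → y ∈ A → c ≤ F₁ y - ε) ∧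
        (∀ y, y ∈ Metric.ball y₀ r → y ∈ B → -F₂ y + ε ≤ c))) := by
    intro y₀
    by_cases hy₀ : y₀ ∈ A ∪ B
    swap
    · exact ⟨1, one_pos, 0, fun h => absurd h hy₀⟩
    by_cases hy₀A : y₀ ∈ A
    · obtain ⟨U₁, hU₁o, hU₁m, hU₁⟩ := hF₁lsc y₀ hy₀A (ε/2) (by linarith)
      by_cases hy₀B : y₀ ∈ B
      · obtain ⟨U₂, hU₂o, hU₂m, hU₂⟩ := hF₂lsc y₀ hy₀B (ε/2) (by linarith)
        obtain ⟨r, hr0, hball⟩ := Metric.isOpen_iff.1 (hU₁o.inter hU₂o) y₀ ⟨hU₁m, hU₂m⟩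
        refine ⟨r, hr0, F₁ y₀ - 3*ε/2, fun _ => ⟨?_, ?_⟩⟩
        · intro y hyb hyA
          have := hU₁ y (hball hyb).1 hyA
          linarith
        · intro y hyb hyB
          have h2 := hU₂ y (hball hyb).2 hyB
          have h3 := hsum y₀ hy₀A hy₀B
          linarith
      · have hBc : IsOpen Bᶜ := hBcomp.isClosed.isOpen_compl
        obtain ⟨r, hr0, hball⟩ := Metric.isOpen_iff.1 (hU₁o.inter hBc) y₀ ⟨hU₁m, hy₀B⟩
        refine ⟨r, hr0, F₁ y₀ - 3*ε/2, fun _ => ⟨?_, ?_⟩⟩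
        · intro y hyb hyA
          have := hU₁ y (hball hyb).1 hyA
          linarith
        · intro y hyb hyB
          exact absurd hyB (hball hyb).2
    · have hy₀B : y₀ ∈ B := hy₀.resolve_left hy₀A
      obtain ⟨U₂, hU₂o, hU₂m, hU₂⟩ := hF₂lsc y₀ hy₀B (ε/2) (by linarith)
      have hAc : IsOpen Aᶜ := hAcomp.isClosed.isOpen_compl
      obtain ⟨r, hr0, hball⟩ := Metric.isOpen_iff.1 (hU₂o.inter hAc) y₀ ⟨hU₂m, hy₀A⟩
      refine ⟨r, hr0, -F₂ y₀ + 3*ε/2, fun _ => ⟨?_, ?_⟩⟩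
      · intro y hyb hyA
        exact absurd hyA (hball hyb).2
      · intro y hyb hyB
        have := hU₂ y (hball hyb).1 hyB
        linarith
  choose r hr0 c hc using hloc
  have hABcomp : IsCompact (A ∪ B) := hAcomp.union hBcomp
  obtain ⟨t, hts, hcover⟩ := hABcomp.elim_nhds_subcover (fun y₀ => Metric.ball y₀ (r y₀))
    (fun y₀ _ => Metric.ball_mem_nhds y₀ (hr0 y₀))
  set ψ : (Fin m → ℝ) → (Fin m → ℝ) → ℝ := fun i y => max (r i - dist y i) 0 with hψ
  have hψcont : ∀ i, Continuous (ψ i) := fun i =>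
    ((continuous_const.sub (continuous_id.dist continuous_const)).max continuous_const)
  have hψnonneg : ∀ i y, 0 ≤ ψ i y := fun i y => le_max_right _ _
  have hψpos : ∀ i y, 0 < ψ i y ↔ y ∈ Metric.ball i (r i) := by
    intro i y
    rw [Metric.mem_ball]
    constructor
    · intro h0
      rcases lt_max_iff.1 h0 with h1 | h1
      · linarith [sub_pos.1 h1]
      · exact absurd h1 (lt_irrefl 0)
    · intro h1
      exact lt_max_iff.2 (Or.inl (by linarith))
  set D : (Fin m → ℝ) → ℝ := fun y => ∑ i ∈ t, ψ i y with hDdef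
  have hDpos : ∀ y ∈ A ∪ B, 0 < D y := by
    intro y hy
    have hyc := hcover hy
    rw [Set.mem_iUnion₂] at hyc
    obtain ⟨i, hit, hyb⟩ := hyc
    exact Finset.sum_pos' (fun i _ => hψnonneg i y) ⟨i, hit, (hψpos i y).2 hyb⟩
  set G : (Fin m → ℝ) → ℝ := fun y => (∑ i ∈ t, ψ i y * c i) / D y with hGdef
  have hGcont : ContinuousOn G (A ∪ B) := ContinuousOn.div
    (Continuous.continuousOn (continuous_finset_sum t fun i _ => (hψcont i).mul continuous_const))
    (Continuous.continuousOn (continuous_finset_sum t fun i _ => hψcont i))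
    (fun y hy => ne_of_gt (hDpos y hy))
  have hGA : ∀ y ∈ A, G y ≤ F₁ y - ε := by
    intro y hyA
    have hDy : 0 < D y := hDpos y (Or.inl hyA)
    rw [hGdef, div_le_iff₀ hDy]
    have hterm : ∑ i ∈ t, ψ i y * c i ≤ ∑ i ∈ t, ψ i y * (F₁ y - ε) := by
      apply Finset.sum_le_sum
      intro i hit
      rcases eq_or_lt_of_le (hψnonneg i y) with h0 | h0
      · rw [← h0, zero_mul, zero_mul]
      · have hyb : y ∈ Metric.ball i (r i) := (hψpos i y).1 h0
        exact mul_le_mul_of_nonneg_left ((hc i (hts i hit)).1 y hyb hyA) (hψnonneg i y)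
    rw [← Finset.sum_mul] at hterm
    exact hterm.trans_eq (mul_comm _ _)
  have hGB : ∀ y ∈ B, -F₂ y + ε ≤ G y := by
    intro y hyB
    have hDy : 0 < D y := hDpos y (Or.inr hyB)
    rw [hGdef, le_div_iff₀ hDy]
    have hterm : ∑ i ∈ t, ψ i y * (-F₂ y + ε) ≤ ∑ i ∈ t, ψ i y * c i := by
      apply Finset.sum_le_sum
      intro i hit
      rcases eq_or_lt_of_le (hψnonneg i y) with h0 | h0
      · rw [← h0, zero_mul, zero_mul]
      · have hyb : y ∈ Metric.ball i (r i) := (hψpos i y).1 h0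
        exact mul_le_mul_of_nonneg_left ((hc i (hts i hit)).2 y hyb hyB) (hψnonneg i y)
    rw [← Finset.sum_mul] at hterm
    exact le_trans (le_of_eq (mul_comm _ _)) hterm
  obtain ⟨q, hq⟩ := poly_approx hABcomp G hGcont (ε := ε/2) (by linarith)
  refine ⟨q, ?_, ?_⟩
  · intro w hw
    have hyA : w.2 ∈ A := ⟨w, hw, rfl⟩
    have h1 := abs_lt.1 (hq w.2 (Or.inl hyA))
    have h2 := hGA w.2 hyA
    have h3 := hF₁lb w hw
    show eval w.2 q < φ₁ w
    linarith [h1.2]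
  · intro w hw
    have hyB : w.1 ∈ B := ⟨w, hw, rfl⟩
    have h1 := abs_lt.1 (hq w.1 (Or.inr hyB))
    have h2 := hGB w.1 hyB
    have h3 := hF₂lb w hw
    show 0 < φ₂ w + eval w.1 q
    linarith [h1.1]

end SP

theorem specialized_putinar_both
    (n m p a b : ℕ)
    (g : Fin a → MvPolynomial (Fin n ⊕ Fin m) ℝ)
    (h : Fin b → MvPolynomial (Fin m ⊕ Fin p) ℝ)
    (Kxy : Set ((Fin n → ℝ) × (Fin m → ℝ)))
    (Kyz : Set ((Fin m → ℝ) × (Fin p → ℝ)))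
    (K : Set ((Fin n → ℝ) × (Fin m → ℝ) × (Fin p → ℝ)))
    (hKxy : Kxy = {w | ∀ j, 0 ≤ eval (Sum.elim w.1 w.2) (g j)})
    (hKyz : Kyz = {w | ∀ k, 0 ≤ eval (Sum.elim w.1 w.2) (h k)})
    (hK : K = {w | (w.1, w.2.1) ∈ Kxy ∧ w.2 ∈ Kyz})
    (hKxyCompact : IsCompact Kxy) (hKyzCompact : IsCompact Kyz)
    (hKint : (interior K).Nonempty)
    (N N' : ℝ)
    (hN : InQuadraticModule g (C N - ∑ v : Fin n ⊕ Fin m, X v ^ 2))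
    (hN' : InQuadraticModule h (C N' - ∑ v : Fin m ⊕ Fin p, X v ^ 2))
    (f : MvPolynomial (Fin n ⊕ Fin m ⊕ Fin p) ℝ)
    (f₁ : MvPolynomial (Fin n ⊕ Fin m) ℝ) (f₂ : MvPolynomial (Fin m ⊕ Fin p) ℝ)
    (hf : f = rename (Sum.map id Sum.inl) f₁ + rename Sum.inr f₂)
    (hpos : ∀ w ∈ K, 0 < eval (Sum.elim w.1 (Sum.elim w.2.1 w.2.2)) f) :
    ∃ (σ : MvPolynomial (Fin n ⊕ Fin m) ℝ) (ψ : MvPolynomial (Fin m ⊕ Fin p) ℝ),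
      InQuadraticModule g σ ∧ InQuadraticModule h ψ ∧
      f = rename (Sum.map id Sum.inl) σ + rename Sum.inr ψ := by
  classical
  obtain ⟨w₀, hw₀⟩ := hKint
  have hw₀K : w₀ ∈ K := interior_subset hw₀
  rw [hK] at hw₀K
  obtain ⟨hw₀xy, hw₀yz⟩ := hw₀K
  have hpos' : ∀ w1 ∈ Kxy, ∀ w2 ∈ Kyz, w1.2 = w2.1 →
      0 < eval (Sum.elim w1.1 w1.2) f₁ + eval (Sum.elim w2.1 w2.2) f₂ := by
    intro w1 h1 w2 h2 heq
    have hmem : ((w1.1, w1.2, w2.2) : (Fin n → ℝ) × (Fin m → ℝ) × (Fin p → ℝ)) ∈ K := by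
      rw [hK]
      refine ⟨by simpa using h1, ?_⟩
      show (w1.2, w2.2) ∈ Kyz
      rw [heq]
      simpa using h2
    have hp := hpos _ hmem
    rw [hf, map_add, eval_rename, eval_rename] at hp
    have e1 : (Sum.elim w1.1 (Sum.elim w1.2 w2.2)) ∘ (Sum.map id Sum.inl)
        = Sum.elim w1.1 w1.2 := by funext v; cases v <;> rfl
    have e2 : (Sum.elim w1.1 (Sum.elim w1.2 w2.2)) ∘ (Sum.inr : (Fin m ⊕ Fin p) → _)
        = Sum.elim w1.2 w2.2 := rfl
    rw [e1, e2] at hp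
    rw [← heq]
    exact hp
  obtain ⟨q, hq1, hq2⟩ := SP.exists_sep hKxyCompact hKyzCompact f₁ f₂ hpos'
  have hxyne : ∀ j, 0 ≤ eval (Sum.elim w₀.1 w₀.2.1) (g j) := by
    rw [hKxy] at hw₀xy
    exact hw₀xy
  have hyzne : ∀ k, 0 ≤ eval (Sum.elim w₀.2.1 w₀.2.2) (h k) := by
    rw [hKyz] at hw₀yz
    exact hw₀yz
  have helim : ∀ {α β : Type} (x : α ⊕ β → ℝ),
      Sum.elim (fun i => x (Sum.inl i)) (fun j => x (Sum.inr j)) = x := by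
    intro α β x; funext v; cases v <;> rfl
  have hσ : InQuadraticModule g (f₁ - rename Sum.inr q) := by
    refine SP.putinar g N hN (Sum.elim w₀.1 w₀.2.1) hxyne _ ?_
    intro x hx
    have hw : ((fun i => x (Sum.inl i), fun j => x (Sum.inr j)) :
        (Fin n → ℝ) × (Fin m → ℝ)) ∈ Kxy := by
      rw [hKxy]
      intro j
      show 0 ≤ eval (Sum.elim (fun i => x (Sum.inl i)) (fun j => x (Sum.inr j))) (g j)
      rw [helim x]
      exact hx j
    have hlt := hq1 _ hw
    simp only at hlt
    rw [helim x] at hlt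
    rw [map_sub, eval_rename]
    have e3 : x ∘ (Sum.inr : Fin m → Fin n ⊕ Fin m) = fun j => x (Sum.inr j) := rfl
    rw [e3]
    linarith
  have hψ : InQuadraticModule h (f₂ + rename Sum.inl q) := by
    refine SP.putinar h N' hN' (Sum.elim w₀.2.1 w₀.2.2) hyzne _ ?_
    intro x hx
    have hw : ((fun i => x (Sum.inl i), fun j => x (Sum.inr j)) :
        (Fin m → ℝ) × (Fin p → ℝ)) ∈ Kyz := by
      rw [hKyz]
      intro k
      show 0 ≤ eval (Sum.elim (fun i => x (Sum.inl i)) (fun j => x (Sum.inr j))) (h k)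
      rw [helim x]
      exact hx k
    have hlt := hq2 _ hw
    simp only at hlt
    rw [helim x] at hlt
    rw [map_add, eval_rename]
    have e3 : x ∘ (Sum.inl : Fin m → Fin m ⊕ Fin p) = fun j => x (Sum.inl j) := rfl
    rw [e3]
    linarith
  refine ⟨f₁ - rename Sum.inr q, f₂ + rename Sum.inl q, hσ, hψ, ?_⟩
  rw [hf, map_sub, map_add, rename_rename, rename_rename]
  have e4 : (Sum.map id Sum.inl : (Fin n ⊕ Fin m) → (Fin n ⊕ Fin m ⊕ Fin p)) ∘
      (Sum.inr : Fin m → Fin n ⊕ Fin m)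
      = (Sum.inr : (Fin m ⊕ Fin p) → _) ∘ (Sum.inl : Fin m → Fin m ⊕ Fin p) := rfl
  rw [e4]
  ring
end

section
/- Let K_xy ⊂ ℝ^{n+m} and K_yz ⊂ ℝ^{m+p} be compact, and assume K has nonempty interior. Assume the polynomials are normalized: 0 ≤ g_j(x,y) ≤ 1 for all (x,y) ∈ K_xy and all j ∈ I_xy, and 0 ≤ h_k(y,z) ≤ 1 for all (y,z) ∈ K_yz and all k ∈ I_yz. Assume further that the family {0, 1, g_j (j ∈ I_xy)} generates ℝ[X,Y] as an ℝ-algebra and the family {0, 1, h_k (k ∈ I_yz)} generates ℝ[Y,Z] as an ℝ-algebra. If f ∈ ℝ[X,Y] + ℝ[Y,Z] and f(x,y,z) > 0 for all (x,y,z) ∈ K, then f ∈ C(g,1−g) + C(h,1−h), i.e. f = σ + ψ for some σ ∈ C(g,1−g) and ψ ∈ C(h,1−h). -/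
open MvPolynomial Finset

/-- Membership in the cone generated by the family `{g_j, 1 - g_j}`: finite sums
`Σ_{α,β} c_{αβ} ∏_j g_j^{α_j} (1 - g_j)^{β_j}` with nonnegative coefficients. -/
def InCone {ι κ : Type*} [Fintype κ]
    (g : κ → MvPolynomial ι ℝ) (σ : MvPolynomial ι ℝ) : Prop :=
  ∃ (s : Finset ((κ → ℕ) × (κ → ℕ))) (c : (κ → ℕ) × (κ → ℕ) → ℝ),
    (∀ ab ∈ s, 0 ≤ c ab) ∧
    σ = ∑ ab ∈ s, C (c ab) * ∏ j, (g j) ^ (ab.1 j) * (1 - g j) ^ (ab.2 j)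

namespace KVAux

lemma abs_prod_sub_prod_le {β : Type*} (s : Finset β) (u v : β → ℝ)
    (hu : ∀ i ∈ s, u i ∈ Set.Icc (0:ℝ) 1) (hv : ∀ i ∈ s, v i ∈ Set.Icc (0:ℝ) 1) :
    |∏ i ∈ s, u i - ∏ i ∈ s, v i| ≤ ∑ i ∈ s, |u i - v i| := by
  induction s using Finset.cons_induction with
  | empty => simp
  | cons a s ha ih =>
    rw [prod_cons, prod_cons, sum_cons]
    have h1 := ih (fun i hi => hu i (mem_cons_of_mem hi)) (fun i hi => hv i (mem_cons_of_mem hi))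
    have hua := hu a (mem_cons_self a s)
    have hva := hv a (mem_cons_self a s)
    have hPv0 : (0:ℝ) ≤ ∏ i ∈ s, v i :=
      Finset.prod_nonneg fun i hi => (hv i (mem_cons_of_mem hi)).1
    have hPv1 : ∏ i ∈ s, v i ≤ 1 :=
      Finset.prod_le_one (fun i hi => (hv i (mem_cons_of_mem hi)).1)
        (fun i hi => (hv i (mem_cons_of_mem hi)).2)
    calc |u a * ∏ i ∈ s, u i - v a * ∏ i ∈ s, v i|
        = |u a * (∏ i ∈ s, u i - ∏ i ∈ s, v i) + (u a - v a) * ∏ i ∈ s, v i| := by ring_nf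
      _ ≤ |u a * (∏ i ∈ s, u i - ∏ i ∈ s, v i)| + |(u a - v a) * ∏ i ∈ s, v i| := abs_add_le _ _
      _ = |u a| * |∏ i ∈ s, u i - ∏ i ∈ s, v i| + |u a - v a| * |∏ i ∈ s, v i| := by
          rw [abs_mul, abs_mul]
      _ ≤ 1 * (∑ i ∈ s, |u i - v i|) + |u a - v a| * 1 := by
          have e1 : |u a| ≤ 1 := by rw [abs_le]; exact ⟨by linarith [hua.1], hua.2⟩
          have e2 : |∏ i ∈ s, v i| ≤ 1 := by rw [abs_le]; exact ⟨by linarith [hPv0], hPv1⟩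
          exact add_le_add (mul_le_mul e1 h1 (abs_nonneg _) zero_le_one)
            (mul_le_mul_of_nonneg_left e2 (abs_nonneg _))
      _ = |u a - v a| + ∑ i ∈ s, |u i - v i| := by ring

lemma bern_identity {R : Type*} [CommRing R] (x : R) {i N : ℕ} (hiN : i ≤ N) :
    ∑ k ∈ range (N + 1), (k.choose i : R) * (N.choose k : R) * (x ^ k * (1 - x) ^ (N - k))
      = (N.choose i : R) * x ^ i := by
  set T : ℕ → R := fun k => (k.choose i : R) * (N.choose k : R) * (x ^ k * (1 - x) ^ (N - k))
    with hT
  have h1 : ∑ k ∈ range (N + 1), T k = ∑ k ∈ Ico i (N + 1), T k := by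
    refine (Finset.sum_subset ?_ ?_).symm
    · intro k hk; simp only [mem_Ico, mem_range] at *; omega
    · intro k hk hk'
      simp only [mem_Ico, mem_range] at hk hk'
      have : k < i := by omega
      simp [hT, Nat.choose_eq_zero_of_lt this]
  rw [h1, Finset.sum_Ico_eq_sum_range]
  have h2 : N + 1 - i = (N - i) + 1 := by omega
  rw [h2]
  have h3 : ∀ r ∈ range ((N - i) + 1),
      T (i + r) = ((N.choose i : R) * x ^ i) * (((N - i).choose r : R) * x ^ r * (1 - x) ^ ((N - i) - r)) := by
    intro r hr
    simp only [mem_range] at hr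
    have hirN : i + r ≤ N := by omega
    have hkey : (i + r).choose i * N.choose (i + r) = N.choose i * (N - i).choose r := by
      have := Nat.choose_mul (n := N) (k := i + r) (s := i) (Nat.le_add_right i r)
      rw [mul_comm ((i+r).choose i) (N.choose (i+r))]
      rw [this, Nat.add_sub_cancel_left]
    have hsub : N - (i + r) = (N - i) - r := by omega
    have :  (((i + r).choose i : R) * (N.choose (i + r) : R))
        = (N.choose i : R) * ((N - i).choose r : R) := by
      rw [← Nat.cast_mul, ← Nat.cast_mul, hkey]
    simp only [hT]
    rw [hsub, pow_add]
    calc ((i + r).choose i : R) * (N.choose (i + r) : R) * (x ^ i * x ^ r * (1 - x) ^ (N - i - r))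
        = (((i + r).choose i : R) * (N.choose (i + r) : R)) * (x ^ i * x ^ r * (1 - x) ^ (N - i - r)) := by ring
      _ = ((N.choose i : R) * ((N - i).choose r : R)) * (x ^ i * x ^ r * (1 - x) ^ (N - i - r)) := by rw [this]
      _ = ((N.choose i : R) * x ^ i) * (((N - i).choose r : R) * x ^ r * (1 - x) ^ ((N - i) - r)) := by ring
  rw [Finset.sum_congr rfl h3, ← Finset.mul_sum]
  have h4 : ∑ r ∈ range ((N - i) + 1), (((N - i).choose r : R) * x ^ r * (1 - x) ^ ((N - i) - r)) = 1 := by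
    have := add_pow x (1 - x) (N - i)
    have hx1 : x + (1 - x) = 1 := by ring
    rw [hx1, one_pow] at this
    calc ∑ r ∈ range ((N - i) + 1), (((N - i).choose r : R) * x ^ r * (1 - x) ^ ((N - i) - r))
        = ∑ m ∈ range ((N - i) + 1), x ^ m * (1 - x) ^ ((N - i) - m) * ((N - i).choose m : R) :=
          Finset.sum_congr rfl fun r _ => by ring
      _ = 1 := this.symm
  rw [h4, mul_one]

noncomputable def rho (i k N : ℕ) : ℝ := (k.choose i : ℝ) / (N.choose i : ℝ)

lemma rho_mem_Icc {i k N : ℕ} (hiN : i ≤ N) (hk : k ≤ N) : rho i k N ∈ Set.Icc (0:ℝ) 1 := by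
  have hpos : (0:ℝ) < (N.choose i : ℝ) := by exact_mod_cast Nat.choose_pos hiN
  constructor
  · exact div_nonneg (Nat.cast_nonneg _) (Nat.cast_nonneg _)
  · show (k.choose i : ℝ)/(N.choose i : ℝ) ≤ 1
    rw [div_le_one hpos]; exact_mod_cast Nat.choose_le_choose i hk

lemma rho_eq_prod {i k N : ℕ} (hik : i ≤ k) (hkN : k ≤ N) :
    rho i k N = ∏ j ∈ range i, (((k:ℝ) - j) / ((N:ℝ) - j)) := by
  have hiN : i ≤ N := le_trans hik hkN
  have hfact : (0:ℝ) < (i.factorial : ℝ) := by exact_mod_cast Nat.factorial_pos i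
  have hdfk : (k.descFactorial i : ℝ) = (i.factorial : ℝ) * (k.choose i : ℝ) := by
    exact_mod_cast congrArg (Nat.cast : ℕ → ℝ) (Nat.descFactorial_eq_factorial_mul_choose k i)
  have hdfN : (N.descFactorial i : ℝ) = (i.factorial : ℝ) * (N.choose i : ℝ) := by
    exact_mod_cast congrArg (Nat.cast : ℕ → ℝ) (Nat.descFactorial_eq_factorial_mul_choose N i)
  have hprodk : (k.descFactorial i : ℝ) = ∏ j ∈ range i, ((k:ℝ) - j) := by
    rw [Nat.descFactorial_eq_prod_range, Nat.cast_prod]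
    refine Finset.prod_congr rfl fun j hj => ?_
    have hjk : j ≤ k := le_trans (le_of_lt (mem_range.mp hj)) hik
    push_cast [Nat.cast_sub hjk]; ring
  have hprodN : (N.descFactorial i : ℝ) = ∏ j ∈ range i, ((N:ℝ) - j) := by
    rw [Nat.descFactorial_eq_prod_range, Nat.cast_prod]
    refine Finset.prod_congr rfl fun j hj => ?_
    have hjN : j ≤ N := le_trans (le_of_lt (mem_range.mp hj)) hiN
    push_cast [Nat.cast_sub hjN]; ring
  have hkey : rho i k N = (k.descFactorial i : ℝ) / (N.descFactorial i : ℝ) := by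
    rw [hdfk, hdfN, mul_div_mul_left _ _ (ne_of_gt hfact)]; rfl
  rw [hkey, hprodk, hprodN, Finset.prod_div_distrib]

lemma rho_bound {i k N d : ℕ} (hid : i ≤ d) (hdN : d < N) (hkN : k ≤ N) :
    |rho i k N - ((k:ℝ)/N)^i| ≤ (d:ℝ) * ((d:ℝ)+1) / ((N:ℝ) - (d:ℝ)) := by
  have hNpos : (0:ℝ) < N := by exact_mod_cast Nat.lt_of_le_of_lt (Nat.zero_le d) hdN
  have hdR : (d:ℝ) < (N:ℝ) := by exact_mod_cast hdN
  have hNd : (0:ℝ) < (N:ℝ) - d := by linarith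
  have hkR : (k:ℝ) ≤ (N:ℝ) := by exact_mod_cast hkN
  have hb0 : (0:ℝ) ≤ (k:ℝ)/N := div_nonneg (Nat.cast_nonneg _) (le_of_lt hNpos)
  have hb1 : (k:ℝ)/N ≤ 1 := by rw [div_le_one hNpos]; exact hkR
  by_cases hik : i ≤ k
  · rw [rho_eq_prod hik hkN]
    have hbpow : ((k:ℝ)/N)^i = ∏ _j ∈ range i, ((k:ℝ)/N) := by
      rw [Finset.prod_const, card_range]
    rw [hbpow]
    have hu : ∀ j ∈ range i, ((k:ℝ) - j)/((N:ℝ) - j) ∈ Set.Icc (0:ℝ) 1 := by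
      intro j hj
      have hji : j < i := mem_range.mp hj
      have hjk : (j:ℝ) ≤ k := by exact_mod_cast Nat.le_of_lt_succ (Nat.lt_succ_of_lt (lt_of_lt_of_le hji hik))
      have hjd : (j:ℝ) ≤ d := by
        have : j ≤ d := by omega
        exact_mod_cast this
      have hjN : (0:ℝ) < (N:ℝ) - j := by linarith
      constructor
      · exact div_nonneg (by linarith) (le_of_lt hjN)
      · rw [div_le_one hjN]; linarith
    have hv : ∀ j ∈ range i, (k:ℝ)/N ∈ Set.Icc (0:ℝ) 1 := fun j _ => ⟨hb0, hb1⟩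
    refine le_trans (abs_prod_sub_prod_le _ _ _ hu hv) ?_
    have hterm : ∀ j ∈ range i, |((k:ℝ) - j)/((N:ℝ) - j) - (k:ℝ)/N| ≤ (d:ℝ)/((N:ℝ) - d) := by
      intro j hj
      have hji : j < i := mem_range.mp hj
      have hjd : (j:ℝ) ≤ d := by
        have : j ≤ d := by omega
        exact_mod_cast this
      have hj0 : (0:ℝ) ≤ j := Nat.cast_nonneg j
      have hjN : (0:ℝ) < (N:ℝ) - j := by linarith
      have hNk : (0:ℝ) ≤ (N:ℝ) - k := by linarith
      have heq : ((k:ℝ) - j)/((N:ℝ) - j) - (k:ℝ)/N = -((j:ℝ) * ((N:ℝ) - k)) / (((N:ℝ) - j) * N) := by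
        field_simp
        ring
      rw [heq, abs_div, abs_neg, abs_of_nonneg (mul_nonneg hj0 hNk),
        abs_of_pos (mul_pos hjN hNpos)]
      rw [div_le_div_iff₀ (mul_pos hjN hNpos) hNd]
      have s1 : (j:ℝ) * ((N:ℝ) - k) ≤ (d:ℝ) * (N:ℝ) := mul_le_mul hjd (by linarith) hNk (Nat.cast_nonneg d)
      have s2 : (j:ℝ) * ((N:ℝ) - k) * ((N:ℝ) - d) ≤ (d:ℝ) * (N:ℝ) * ((N:ℝ) - j) :=
        mul_le_mul s1 (by linarith) (le_of_lt hNd) (by positivity)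
      nlinarith [s2]
    refine le_trans (Finset.sum_le_sum hterm) ?_
    rw [Finset.sum_const, card_range, nsmul_eq_mul]
    have hiR : (i:ℝ) ≤ d := by exact_mod_cast hid
    have hdiv : (0:ℝ) ≤ (d:ℝ)/((N:ℝ) - d) := div_nonneg (Nat.cast_nonneg d) (le_of_lt hNd)
    calc (i:ℝ) * ((d:ℝ)/((N:ℝ) - d)) ≤ (d:ℝ) * ((d:ℝ)/((N:ℝ) - d)) :=
          mul_le_mul_of_nonneg_right hiR hdiv
      _ = (d:ℝ) * (d:ℝ) / ((N:ℝ) - d) := by rw [mul_div_assoc]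
      _ ≤ (d:ℝ) * ((d:ℝ)+1) / ((N:ℝ) - d) := by
          apply (div_le_div_iff_of_pos_right hNd).mpr
          nlinarith [Nat.cast_nonneg (α := ℝ) d]
  · have hki : k < i := not_le.mp hik
    have hrho0 : rho i k N = 0 := by simp [rho, Nat.choose_eq_zero_of_lt hki]
    rw [hrho0, zero_sub, abs_neg, abs_of_nonneg (pow_nonneg hb0 i)]
    have h1i : 1 ≤ i := by omega
    have hp : ((k:ℝ)/N)^i ≤ ((k:ℝ)/N)^1 := pow_le_pow_of_le_one hb0 hb1 h1i
    rw [pow_one] at hp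
    have hkd : (k:ℝ) ≤ d := by
      have : k ≤ d := by omega
      exact_mod_cast this
    have h2 : (k:ℝ)/N ≤ (d:ℝ)/((N:ℝ) - d) :=
      div_le_div₀ (Nat.cast_nonneg d) hkd hNd (by linarith)
    have h3 : (d:ℝ)/((N:ℝ) - d) ≤ (d:ℝ) * ((d:ℝ)+1)/((N:ℝ) - d) := by
      apply (div_le_div_iff_of_pos_right hNd).mpr
      nlinarith [Nat.cast_nonneg (α := ℝ) d]
    linarith

variable {a : ℕ}

lemma X_pow_eq (j : Fin a) {i N : ℕ} (hiN : i ≤ N) :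
    (X j ^ i : MvPolynomial (Fin a) ℝ)
      = ∑ k ∈ range (N + 1), C (rho i k N * (N.choose k : ℝ)) * (X j ^ k * (1 - X j) ^ (N - k)) := by
  have hpos : (0:ℝ) < (N.choose i : ℝ) := by exact_mod_cast Nat.choose_pos hiN
  have base := bern_identity (R := MvPolynomial (Fin a) ℝ) (X j) hiN
  have hcast : ∀ k : ℕ, ((k.choose i : MvPolynomial (Fin a) ℝ)) * (N.choose k : MvPolynomial (Fin a) ℝ)
      = C ((k.choose i : ℝ) * (N.choose k : ℝ)) := by
    intro k
    rw [map_mul]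
    rw [show ((k.choose i : ℝ)) = ((k.choose i : ℕ) : ℝ) from rfl]
    rw [MvPolynomial.C_eq_coe_nat, MvPolynomial.C_eq_coe_nat]
  calc (X j ^ i : MvPolynomial (Fin a) ℝ)
      = C ((N.choose i : ℝ))⁻¹ * (C ((N.choose i : ℝ)) * X j ^ i) := by
        rw [← mul_assoc, ← map_mul, inv_mul_cancel₀ (ne_of_gt hpos), map_one, one_mul]
    _ = C ((N.choose i : ℝ))⁻¹ *
        ∑ k ∈ range (N + 1), (k.choose i : MvPolynomial (Fin a) ℝ) * (N.choose k : MvPolynomial (Fin a) ℝ) * (X j ^ k * (1 - X j) ^ (N - k)) := by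
        rw [base]
        norm_cast
    _ = ∑ k ∈ range (N + 1), C (rho i k N * (N.choose k : ℝ)) * (X j ^ k * (1 - X j) ^ (N - k)) := by
        rw [Finset.mul_sum]
        refine Finset.sum_congr rfl fun k _ => ?_
        rw [hcast k, ← mul_assoc, ← map_mul]
        congr 2
        rw [rho]
        field_simp

lemma monomial_bern {N : ℕ} (α : Fin a → ℕ) (hα : ∀ j, α j ≤ N) :
    (∏ j, X j ^ α j : MvPolynomial (Fin a) ℝ)
      = ∑ k ∈ Fintype.piFinset (fun _ : Fin a => range (N + 1)),
          C ((∏ j, rho (α j) (k j) N) * ∏ j, (N.choose (k j) : ℝ))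
            * ∏ j, (X j ^ (k j) * (1 - X j) ^ (N - k j)) := by
  calc (∏ j, X j ^ α j : MvPolynomial (Fin a) ℝ)
      = ∏ j, ∑ k ∈ range (N + 1), C (rho (α j) k N * (N.choose k : ℝ)) * (X j ^ k * (1 - X j) ^ (N - k)) :=
        Finset.prod_congr rfl fun j _ => X_pow_eq j (hα j)
    _ = ∑ k ∈ Fintype.piFinset (fun _ : Fin a => range (N + 1)),
          ∏ j, (C (rho (α j) (k j) N * (N.choose (k j) : ℝ)) * (X j ^ (k j) * (1 - X j) ^ (N - k j))) :=
        Finset.prod_univ_sum _ _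
    _ = _ := by
        refine Finset.sum_congr rfl fun k _ => ?_
        rw [Finset.prod_mul_distrib, ← map_prod]
        congr 2
        rw [Finset.prod_mul_distrib]

lemma bernstein_cert (G : MvPolynomial (Fin a) ℝ)
    (hG : ∀ t : Fin a → ℝ, (∀ j, t j ∈ Set.Icc (0:ℝ) 1) → 0 < eval t G) :
    InCone (fun j : Fin a => (X j : MvPolynomial (Fin a) ℝ)) G := by
  classical
  -- cube and minimum
  set cube : Set (Fin a → ℝ) := Set.univ.pi fun _ => Set.Icc (0:ℝ) 1 with hcube
  have hmemcube : ∀ t : Fin a → ℝ, t ∈ cube ↔ ∀ j, t j ∈ Set.Icc (0:ℝ) 1 := by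
    intro t; constructor
    · intro ht j; exact ht j (Set.mem_univ j)
    · intro ht j _; exact ht j
  have hcubeC : IsCompact cube := isCompact_univ_pi fun _ => isCompact_Icc
  have hne : cube.Nonempty := ⟨fun _ => 0, by
    rw [hmemcube]; intro j; exact ⟨le_refl 0, zero_le_one⟩⟩
  obtain ⟨t₀, ht₀, hmin⟩ := hcubeC.exists_isMinOn hne
    (MvPolynomial.continuous_eval (p := G)).continuousOn
  set μ := eval t₀ G with hμdef
  have hμ : 0 < μ := hG t₀ ((hmemcube t₀).mp ht₀)
  have hmin' : ∀ t : Fin a → ℝ, (∀ j, t j ∈ Set.Icc (0:ℝ) 1) → μ ≤ eval t G := by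
    intro t ht
    exact hmin ((hmemcube t).mpr ht)
  -- degree bound
  set d := G.totalDegree with hddef
  have hd : ∀ α ∈ G.support, ∀ j, (α : Fin a →₀ ℕ) j ≤ d := by
    intro α hα j
    by_cases hmem : j ∈ α.support
    · refine le_trans ?_ (MvPolynomial.le_totalDegree hα)
      refine le_trans (Finset.single_le_sum (f := fun i => α i) (fun i _ => Nat.zero_le _) hmem) ?_
      exact le_of_eq rfl
    · simp [Finsupp.notMem_support_iff.mp hmem]
  -- coefficient magnitude
  set A := ∑ α ∈ G.support, |coeff α G| with hAdef
  have hA0 : 0 ≤ A := Finset.sum_nonneg fun α _ => abs_nonneg _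
  -- choose N
  obtain ⟨M, hM⟩ := exists_nat_gt ((A * (a * ((d:ℝ) * ((d:ℝ)+1)))) / μ)
  set N := d + M + 1 with hNdef
  have hdN : d < N := by omega
  have hNR : ((N:ℝ) - (d:ℝ)) = (M:ℝ) + 1 := by
    rw [hNdef]; push_cast; ring
  have hEbound : A * ((a:ℝ) * ((d:ℝ) * ((d:ℝ)+1) / ((N:ℝ) - (d:ℝ)))) < μ := by
    rw [hNR]
    rw [div_lt_iff₀ hμ] at hM
    have hM1 : (0:ℝ) < (M:ℝ) + 1 := by positivity
    rw [show A * ((a:ℝ) * ((d:ℝ) * ((d:ℝ)+1) / ((M:ℝ)+1)))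
        = (A * ((a:ℝ) * ((d:ℝ) * ((d:ℝ)+1)))) / ((M:ℝ)+1) from by ring]
    rw [div_lt_iff₀ hM1]
    nlinarith [hM, hμ]
  -- the Bernstein coefficients
  set Sfun : (Fin a → ℕ) → ℝ :=
    fun k => ∑ α ∈ G.support, coeff α G * ∏ j, rho (α j) (k j) N with hSdef
  -- exact representation
  have hrep : G = ∑ k ∈ Fintype.piFinset (fun _ : Fin a => range (N + 1)),
      C (Sfun k * ∏ j, (N.choose (k j) : ℝ)) * ∏ j, (X j ^ (k j) * (1 - X j) ^ (N - k j)) := by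
    conv_lhs => rw [MvPolynomial.as_sum G]
    have hmono : ∀ α ∈ G.support, (monomial α (coeff α G) : MvPolynomial (Fin a) ℝ)
        = C (coeff α G) * ∏ j, X j ^ α j := by
      intro α _
      rw [monomial_eq]
      congr 1
      exact Finsupp.prod_fintype _ _ fun j => pow_zero _
    calc ∑ α ∈ G.support, (monomial α (coeff α G) : MvPolynomial (Fin a) ℝ)
        = ∑ α ∈ G.support, C (coeff α G) *
            ∑ k ∈ Fintype.piFinset (fun _ : Fin a => range (N + 1)),
              C ((∏ j, rho (α j) (k j) N) * ∏ j, (N.choose (k j) : ℝ))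
                * ∏ j, (X j ^ (k j) * (1 - X j) ^ (N - k j)) := by
          refine Finset.sum_congr rfl fun α hα => ?_
          rw [hmono α hα, monomial_bern (fun j => α j) (fun j => le_trans (hd α hα j) (le_of_lt hdN))]
      _ = ∑ α ∈ G.support, ∑ k ∈ Fintype.piFinset (fun _ : Fin a => range (N + 1)),
            C (coeff α G * ∏ j, rho (α j) (k j) N) * (C (∏ j, (N.choose (k j) : ℝ))
              * ∏ j, (X j ^ (k j) * (1 - X j) ^ (N - k j))) := by
          refine Finset.sum_congr rfl fun α hα => ?_
          rw [Finset.mul_sum]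
          refine Finset.sum_congr rfl fun k _ => ?_
          rw [map_mul, map_mul]
          ring
      _ = ∑ k ∈ Fintype.piFinset (fun _ : Fin a => range (N + 1)),
            ∑ α ∈ G.support,
            C (coeff α G * ∏ j, rho (α j) (k j) N) * (C (∏ j, (N.choose (k j) : ℝ))
              * ∏ j, (X j ^ (k j) * (1 - X j) ^ (N - k j))) := Finset.sum_comm
      _ = _ := by
          refine Finset.sum_congr rfl fun k _ => ?_
          rw [← Finset.sum_mul, ← map_sum, ← mul_assoc, ← map_mul]
  -- positivity of Bernstein coefficients
  have hSpos : ∀ k ∈ Fintype.piFinset (fun _ : Fin a => range (N + 1)), 0 < Sfun k := by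
    intro k hk
    have hkj : ∀ j, k j ≤ N := by
      intro j
      have := Fintype.mem_piFinset.mp hk j
      rw [mem_range] at this
      omega
    have hN0 : (0:ℝ) < N := by
      have : 0 < N := by omega
      exact_mod_cast this
    set t : Fin a → ℝ := fun j => (k j : ℝ) / N with htdef
    have htc : ∀ j, t j ∈ Set.Icc (0:ℝ) 1 := by
      intro j
      constructor
      · exact div_nonneg (Nat.cast_nonneg _) (le_of_lt hN0)
      · rw [div_le_one hN0]; exact_mod_cast hkj j
    have hevalt : eval t G = ∑ α ∈ G.support, coeff α G * ∏ j, (t j) ^ (α j) := by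
      conv_lhs => rw [MvPolynomial.as_sum G]
      rw [map_sum]
      refine Finset.sum_congr rfl fun α _ => ?_
      rw [eval_monomial]
      congr 1
      exact Finsupp.prod_fintype _ _ fun j => pow_zero _
    have hdiff : |Sfun k - eval t G| ≤ A * ((a:ℝ) * ((d:ℝ) * ((d:ℝ)+1) / ((N:ℝ) - (d:ℝ)))) := by
      rw [hevalt, hSdef, ← Finset.sum_sub_distrib]
      refine le_trans (Finset.abs_sum_le_sum_abs _ _) ?_
      rw [hAdef, Finset.sum_mul]
      refine Finset.sum_le_sum fun α hα => ?_
      rw [show coeff α G * ∏ j, rho (α j) (k j) N - coeff α G * ∏ j, t j ^ α j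
          = coeff α G * ((∏ j, rho (α j) (k j) N) - ∏ j, t j ^ α j) from by ring, abs_mul]
      refine mul_le_mul_of_nonneg_left ?_ (abs_nonneg _)
      have hprodbd : |(∏ j, rho (α j) (k j) N) - ∏ j, t j ^ α j|
          ≤ ∑ _j : Fin a, ((d:ℝ) * ((d:ℝ)+1) / ((N:ℝ) - (d:ℝ))) := by
        refine le_trans (abs_prod_sub_prod_le univ _ _
          (fun j _ => rho_mem_Icc (le_trans (hd α hα j) (le_of_lt hdN)) (hkj j))
          (fun j _ => ⟨pow_nonneg (htc j).1 _, pow_le_one₀ (htc j).1 (htc j).2⟩)) ?_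
        refine Finset.sum_le_sum fun j _ => ?_
        exact rho_bound (hd α hα j) hdN (hkj j)
      refine le_trans hprodbd ?_
      rw [Finset.sum_const, card_univ, Fintype.card_fin, nsmul_eq_mul]
    have hlow : μ ≤ eval t G := hmin' t htc
    have habs := (abs_le.mp hdiff).1
    linarith [hEbound]
  -- package
  refine ⟨(Fintype.piFinset (fun _ : Fin a => range (N + 1))).image
      (fun k => (k, fun j => N - k j)),
    fun ab => Sfun ab.1 * ∏ j, (N.choose (ab.1 j) : ℝ), ?_, ?_⟩
  · intro ab hab
    obtain ⟨k, hk, rfl⟩ := Finset.mem_image.mp hab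
    exact mul_nonneg (le_of_lt (hSpos k hk)) (Finset.prod_nonneg fun j _ => Nat.cast_nonneg _)
  · rw [Finset.sum_image (by intro k _ k' _ hkk; exact congrArg Prod.fst hkk)]
    exact hrep

lemma InCone.map {ι ι' κ : Type*} [Fintype κ] {g : κ → MvPolynomial ι ℝ}
    (Φ : MvPolynomial ι ℝ →ₐ[ℝ] MvPolynomial ι' ℝ) {σ : MvPolynomial ι ℝ}
    (h : InCone g σ) : InCone (fun j => Φ (g j)) (Φ σ) := by
  obtain ⟨s, c, hc, rfl⟩ := h
  refine ⟨s, c, hc, ?_⟩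
  rw [map_sum]
  refine Finset.sum_congr rfl fun ab _ => ?_
  rw [map_mul, map_prod]
  congr 1
  · rw [← MvPolynomial.algebraMap_eq, AlgHom.commutes, MvPolynomial.algebraMap_eq]
  · refine Finset.prod_congr rfl fun j _ => ?_
    rw [map_mul, map_pow, map_pow, map_sub, map_one]

lemma krivine {ι : Type*} [Fintype ι] {κ : ℕ} (g : Fin κ → MvPolynomial ι ℝ)
    (hgen : Algebra.adjoin ℝ (Set.range g) = ⊤)
    (F : MvPolynomial ι ℝ)
    (hFpos : ∀ w : ι → ℝ, (∀ j, 0 ≤ eval w (g j)) → 0 < eval w F) :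
    InCone g F := by
  classical
  set Φ : MvPolynomial (Fin κ) ℝ →ₐ[ℝ] MvPolynomial ι ℝ := aeval g with hΦdef
  have hsurj : Function.Surjective Φ := by
    rw [← AlgHom.range_eq_top]
    refine top_unique ?_
    rw [← hgen]
    rw [Algebra.adjoin_le_iff]
    rintro _ ⟨j, rfl⟩
    exact ⟨X j, aeval_X g j⟩
  set fΦ : MvPolynomial (Fin κ) ℝ →+* MvPolynomial ι ℝ := Φ.toRingHom with hfΦdef
  have hsurj' : Function.Surjective fΦ := hsurj
  set I : Ideal (MvPolynomial (Fin κ) ℝ) := RingHom.ker fΦ with hIdef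
  obtain ⟨sgen, hsgen⟩ : I.FG := IsNoetherian.noetherian I
  set q₀ : MvPolynomial (Fin κ) ℝ := ∑ q ∈ sgen, q ^ 2 with hq₀def
  obtain ⟨F₀, hF₀⟩ := hsurj F
  have hq₀mem : q₀ ∈ I := by
    refine Ideal.sum_mem I fun q hq => ?_
    have hqI : q ∈ I := by rw [← hsgen]; exact Ideal.subset_span hq
    rw [sq]
    exact Ideal.mul_mem_left I q hqI
  have hq₀nonneg : ∀ t : Fin κ → ℝ, 0 ≤ eval t q₀ := by
    intro t
    rw [hq₀def, map_sum]
    exact Finset.sum_nonneg fun q _ => by rw [map_pow]; positivity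
  have hpoint : ∀ t : Fin κ → ℝ, (∀ j, t j ∈ Set.Icc (0:ℝ) 1) → eval t q₀ = 0 →
      0 < eval t F₀ := by
    intro t ht ht0
    have hker : ∀ q ∈ I, eval t q = 0 := by
      have hgen0 : ∀ q ∈ sgen, eval t q = 0 := by
        intro q hq
        have hnn : ∀ r ∈ sgen, 0 ≤ eval t (r ^ 2) := fun r _ => by rw [map_pow]; positivity
        have hsum0 : ∑ r ∈ sgen, eval t (r ^ 2) = 0 := by
          rw [← map_sum]; exact ht0
        have hsq := (Finset.sum_eq_zero_iff_of_nonneg hnn).mp hsum0 q hq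
        rw [map_pow] at hsq
        exact pow_eq_zero_iff (two_ne_zero) |>.mp hsq
      intro q hq
      have hle : I ≤ RingHom.ker (eval t) := by
        rw [← hsgen, Ideal.span_le]
        intro r hr
        exact RingHom.mem_ker.mpr (hgen0 r hr)
      exact RingHom.mem_ker.mp (hle hq)
    set e := RingHom.quotientKerEquivOfSurjective hsurj' with hedef
    set ψ : MvPolynomial ι ℝ →+* ℝ :=
      (Ideal.Quotient.lift I (eval t) fun r hr => hker r hr).comp e.symm.toRingHom with hψdef
    have hψΦ : ∀ q : MvPolynomial (Fin κ) ℝ, ψ (fΦ q) = eval t q := by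
      intro q
      have he : e (Ideal.Quotient.mk (RingHom.ker fΦ) q) = fΦ q := RingHom.kerLift_mk fΦ q
      have hsymm : e.symm (fΦ q) = Ideal.Quotient.mk (RingHom.ker fΦ) q := by
        rw [← he, RingEquiv.symm_apply_apply]
      rw [hψdef]
      simp only [RingHom.comp_apply, RingEquiv.toRingHom_eq_coe, RingHom.coe_coe]
      rw [hsymm]
      exact Ideal.Quotient.lift_mk I _ _
    set w : ι → ℝ := fun i => ψ (X i) with hwdef
    have hψeval : ψ = (eval w : MvPolynomial ι ℝ →+* ℝ) := by
      apply MvPolynomial.ringHom_ext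
      · intro r
        have hCr : (C r : MvPolynomial ι ℝ) = fΦ (C r) := by
          rw [hfΦdef]
          simp [hΦdef, aeval_C, MvPolynomial.algebraMap_eq]
        calc ψ (C r) = ψ (fΦ (C r)) := by rw [← hCr]
          _ = eval t (C r) := hψΦ _
          _ = r := eval_C _
          _ = eval w (C r) := (eval_C _).symm
      · intro i
        rw [eval_X]
    have hw : ∀ j, 0 ≤ eval w (g j) := by
      intro j
      have h1 : g j = fΦ (X j) := by
        rw [hfΦdef]; simp [hΦdef, aeval_X]
      have h2 : eval w (g j) = t j := by
        rw [h1, ← hψeval, hψΦ, eval_X]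
      rw [h2]; exact (ht j).1
    have hFt : eval t F₀ = eval w F := by
      rw [← hF₀]
      have : eval w (fΦ F₀) = ψ (fΦ F₀) := by rw [hψeval]
      rw [show (Φ F₀ : MvPolynomial ι ℝ) = fΦ F₀ from rfl, this, hψΦ]
    rw [hFt]
    exact hFpos w hw
  -- choice of lambda
  have hmcube : ∀ t : Fin κ → ℝ, t ∈ (Set.univ.pi fun _ : Fin κ => Set.Icc (0:ℝ) 1)
      ↔ ∀ j, t j ∈ Set.Icc (0:ℝ) 1 := by
    intro t; constructor
    · intro h j; exact h j (Set.mem_univ j)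
    · intro h j _; exact h j
  have hcubeC : IsCompact (Set.univ.pi fun _ : Fin κ => Set.Icc (0:ℝ) 1) :=
    isCompact_univ_pi fun _ => isCompact_Icc
  set Ucomp := (Set.univ.pi fun _ : Fin κ => Set.Icc (0:ℝ) 1) ∩ {t | eval t F₀ ≤ 0} with hUdef
  have hUC : IsCompact Ucomp :=
    hcubeC.inter_right (isClosed_le (MvPolynomial.continuous_eval (p := F₀)) continuous_const)
  obtain ⟨lam, hlam0, hlam⟩ : ∃ lam : ℝ, 0 ≤ lam ∧
      ∀ t : Fin κ → ℝ, (∀ j, t j ∈ Set.Icc (0:ℝ) 1) → 0 < eval t (F₀ + C lam * q₀) := by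
    rcases Set.eq_empty_or_nonempty Ucomp with hemp | hne
    · refine ⟨0, le_refl 0, fun t ht => ?_⟩
      have hF₀pos : 0 < eval t F₀ := by
        by_contra hctr
        push_neg at hctr
        have : t ∈ Ucomp := ⟨(hmcube t).mpr ht, hctr⟩
        rw [hemp] at this
        exact this
      rw [map_add, map_mul, eval_C]
      simp only [zero_mul]
      linarith
    · obtain ⟨tq, htq, hminq⟩ := hUC.exists_isMinOn hne
        (MvPolynomial.continuous_eval (p := q₀)).continuousOn
      obtain ⟨tF, htF, hminF⟩ := hUC.exists_isMinOn hne
        (MvPolynomial.continuous_eval (p := F₀)).continuousOn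
      set δ := eval tq q₀ with hδdef
      set Mm := eval tF F₀ with hMmdef
      have hδpos : 0 < δ := by
        rcases lt_or_eq_of_le (hq₀nonneg tq) with hlt | heq
        · exact hlt
        · exfalso
          have := hpoint tq ((hmcube tq).mp htq.1) heq.symm
          exact absurd this (not_lt.mpr htq.2)
      have hMm0 : Mm ≤ 0 := htF.2
      have hlamnn : 0 ≤ (1 - Mm)/δ := le_of_lt (div_pos (by linarith) hδpos)
      refine ⟨(1 - Mm)/δ, hlamnn, fun t ht => ?_⟩
      rw [map_add, map_mul, eval_C]
      by_cases hcase : eval t F₀ ≤ 0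
      · have htU : t ∈ Ucomp := ⟨(hmcube t).mpr ht, hcase⟩
        have h1 : Mm ≤ eval t F₀ := hminF htU
        have h2 : δ ≤ eval t q₀ := hminq htU
        have h3 : (1 - Mm)/δ * δ ≤ (1 - Mm)/δ * eval t q₀ :=
          mul_le_mul_of_nonneg_left h2 hlamnn
        rw [div_mul_cancel₀ _ (ne_of_gt hδpos)] at h3
        linarith
      · push_neg at hcase
        have h4 : 0 ≤ (1 - Mm)/δ * eval t q₀ :=
          mul_nonneg hlamnn (hq₀nonneg t)
        linarith
  have hcert := bernstein_cert (F₀ + C lam * q₀) hlam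
  have hmap := InCone.map Φ hcert
  have hgX : (fun j => Φ ((fun j : Fin κ => (X j : MvPolynomial (Fin κ) ℝ)) j)) = g := by
    funext j
    exact aeval_X g j
  have hΦval : Φ (F₀ + C lam * q₀) = F := by
    have hq0 : Φ q₀ = 0 := RingHom.mem_ker.mp hq₀mem
    rw [map_add, map_mul, hq0, mul_zero, add_zero, hF₀]
  rw [hgX, hΦval] at hmap
  exact hmap

lemma posGap {X : Type*} [TopologicalSpace X] {K : Set X} (hK : IsCompact K)
    {F : X → ℝ} (hF : ContinuousOn F K) (hpos : ∀ w ∈ K, 0 < F w) :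
    ∃ δ : ℝ, 0 < δ ∧ ∀ w ∈ K, δ ≤ F w := by
  rcases K.eq_empty_or_nonempty with h | hne
  · exact ⟨1, one_pos, by simp [h]⟩
  · obtain ⟨w₀, hw₀, hmin⟩ := hK.exists_isMinOn hne hF
    exact ⟨F w₀, hpos w₀ hw₀, fun w hw => hmin hw⟩

lemma sw_approx {m : ℕ} {S : Set (Fin m → ℝ)} (hS : IsCompact S)
    (c : (Fin m → ℝ) → ℝ) (hc : Continuous c) {ε : ℝ} (hε : 0 < ε) :
    ∃ q : MvPolynomial (Fin m) ℝ, ∀ y ∈ S, |eval y q - c y| < ε := by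
  haveI : CompactSpace S := isCompact_iff_compactSpace.mp hS
  set coords : Fin m → C(S, ℝ) :=
    fun i => ⟨fun y => (y : Fin m → ℝ) i, (continuous_apply i).comp continuous_subtype_val⟩
    with hcoords
  set ev : MvPolynomial (Fin m) ℝ →ₐ[ℝ] C(S, ℝ) := aeval coords with hev
  have hevalpt : ∀ (q : MvPolynomial (Fin m) ℝ) (z : S), (ev q) z = eval (z : Fin m → ℝ) q := by
    intro q z
    induction q using MvPolynomial.induction_on with
    | C r =>
        rw [hev, aeval_C, eval_C]
        simp [Algebra.algebraMap_eq_smul_one]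
    | add f g hf hg =>
        rw [map_add, map_add, ← hf, ← hg]
        rfl
    | mul_X f i hf =>
        rw [map_mul, map_mul, eval_X, ← hf, hev, aeval_X]
        rfl
  have hsep : (ev.range : Subalgebra ℝ C(S, ℝ)).SeparatesPoints := by
    intro y y' hyy'
    have hex : ∃ i, (y : Fin m → ℝ) i ≠ (y' : Fin m → ℝ) i := by
      by_contra hctr
      push_neg at hctr
      exact hyy' (Subtype.ext (funext hctr))
    obtain ⟨i, hi⟩ := hex
    exact ⟨_, ⟨coords i, ⟨X i, aeval_X coords i⟩, rfl⟩, hi⟩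
  obtain ⟨gg, hgg⟩ := ContinuousMap.exists_mem_subalgebra_near_continuous_of_separatesPoints
    ev.range hsep (fun y : S => c y) (hc.comp continuous_subtype_val) ε hε
  obtain ⟨q, hq⟩ := gg.2
  refine ⟨q, fun y hy => ?_⟩
  have h1 := hgg ⟨y, hy⟩
  rw [Real.norm_eq_abs] at h1
  have h2 : ((gg : C(S, ℝ)) : S → ℝ) ⟨y, hy⟩ = eval y q := by
    rw [← hq]
    exact hevalpt q ⟨y, hy⟩
  rw [h2] at h1
  exact h1

lemma exists_transfer_poly {n m p : ℕ}
    (Kxy : Set ((Fin n → ℝ) × (Fin m → ℝ))) (Kyz : Set ((Fin m → ℝ) × (Fin p → ℝ)))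
    (hKxy : IsCompact Kxy) (hKyz : IsCompact Kyz)
    (F1 : (Fin n → ℝ) × (Fin m → ℝ) → ℝ) (F2 : (Fin m → ℝ) × (Fin p → ℝ) → ℝ)
    (hF1 : Continuous F1) (hF2 : Continuous F2)
    (hpos : ∀ w1 ∈ Kxy, ∀ w2 ∈ Kyz, w1.2 = w2.1 → 0 < F1 w1 + F2 w2) :
    ∃ q : MvPolynomial (Fin m) ℝ,
      (∀ w ∈ Kxy, eval w.2 q < F1 w) ∧ (∀ w ∈ Kyz, - F2 w < eval w.1 q) := by
  classical
  set A := Prod.snd '' Kxy with hAdef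
  set B := Prod.fst '' Kyz with hBdef
  have hA : IsCompact A := hKxy.image continuous_snd
  have hB : IsCompact B := hKyz.image continuous_fst
  set S := A ∪ B with hSdef
  have hS : IsCompact S := hA.union hB
  have hloc : ∀ y₀ ∈ S, ∃ (v : ℝ) (U : Set (Fin m → ℝ)), IsOpen U ∧ y₀ ∈ U ∧
      (∀ w ∈ Kxy, w.2 ∈ U → v < F1 w) ∧ (∀ w ∈ Kyz, w.1 ∈ U → - F2 w < v) := by
    intro y₀ hy₀
    have hv : ∃ v : ℝ, (∀ w ∈ Kxy, w.2 = y₀ → v < F1 w) ∧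
        (∀ w ∈ Kyz, w.1 = y₀ → - F2 w < v) := by
      have hsec1C : IsCompact (Kxy ∩ {w | w.2 = y₀}) :=
        hKxy.inter_right (isClosed_eq continuous_snd continuous_const)
      have hsec2C : IsCompact (Kyz ∩ {w | w.1 = y₀}) :=
        hKyz.inter_right (isClosed_eq continuous_fst continuous_const)
      by_cases hA0 : y₀ ∈ A
      · obtain ⟨w₀, hw₀, hw₀2⟩ := hA0
        obtain ⟨w₁, hw₁, hmin₁⟩ := hsec1C.exists_isMinOn ⟨w₀, hw₀, hw₀2⟩ hF1.continuousOn
        by_cases hB0 : y₀ ∈ B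
        · obtain ⟨u₀, hu₀, hu₀1⟩ := hB0
          obtain ⟨w₂, hw₂, hmin₂⟩ := hsec2C.exists_isMinOn ⟨u₀, hu₀, hu₀1⟩ hF2.continuousOn
          have hsum : 0 < F1 w₁ + F2 w₂ := by
            refine hpos w₁ hw₁.1 w₂ hw₂.1 ?_
            rw [hw₁.2, hw₂.2]
          refine ⟨(F1 w₁ - F2 w₂)/2, ?_, ?_⟩
          · intro w hw hw2
            have h5 : F1 w₁ ≤ F1 w := hmin₁ (⟨hw, hw2⟩ : w ∈ Kxy ∩ {w | w.2 = y₀})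
            linarith
          · intro w hw hw1
            have h5 : F2 w₂ ≤ F2 w := hmin₂ (⟨hw, hw1⟩ : w ∈ Kyz ∩ {w | w.1 = y₀})
            linarith
        · refine ⟨F1 w₁ - 1, ?_, ?_⟩
          · intro w hw hw2
            have h5 : F1 w₁ ≤ F1 w := hmin₁ (⟨hw, hw2⟩ : w ∈ Kxy ∩ {w | w.2 = y₀})
            linarith
          · intro w hw hw1
            exact absurd (⟨w, hw, hw1⟩ : y₀ ∈ B) hB0
      · have hB0 : y₀ ∈ B := hy₀.resolve_left hA0
        obtain ⟨u₀, hu₀, hu₀1⟩ := hB0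
        obtain ⟨w₂, hw₂, hmin₂⟩ := hsec2C.exists_isMinOn ⟨u₀, hu₀, hu₀1⟩ hF2.continuousOn
        refine ⟨- F2 w₂ + 1, ?_, ?_⟩
        · intro w hw hw2
          exact absurd (⟨w, hw, hw2⟩ : y₀ ∈ A) hA0
        · intro w hw hw1
          have h5 : F2 w₂ ≤ F2 w := hmin₂ (⟨hw, hw1⟩ : w ∈ Kyz ∩ {w | w.1 = y₀})
          linarith
    obtain ⟨v, hv1, hv2⟩ := hv
    set Bad1 := Prod.snd '' (Kxy ∩ {w | F1 w ≤ v}) with hBad1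
    set Bad2 := Prod.fst '' (Kyz ∩ {w | v ≤ - F2 w}) with hBad2
    have hBad1cl : IsClosed Bad1 :=
      ((hKxy.inter_right (isClosed_le hF1 continuous_const)).image continuous_snd).isClosed
    have hBad2cl : IsClosed Bad2 :=
      ((hKyz.inter_right (isClosed_le continuous_const hF2.neg)).image continuous_fst).isClosed
    refine ⟨v, Bad1ᶜ ∩ Bad2ᶜ, hBad1cl.isOpen_compl.inter hBad2cl.isOpen_compl, ⟨?_, ?_⟩, ?_, ?_⟩
    · rintro ⟨w, ⟨hw, hFw⟩, hw2⟩
      exact absurd (hv1 w hw hw2) (not_lt.mpr hFw)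
    · rintro ⟨w, ⟨hw, hFw⟩, hw1⟩
      exact absurd (hv2 w hw hw1) (not_lt.mpr hFw)
    · intro w hw hwU
      by_contra hctr
      push_neg at hctr
      exact hwU.1 ⟨w, ⟨hw, hctr⟩, rfl⟩
    · intro w hw hwU
      by_contra hctr
      push_neg at hctr
      exact hwU.2 ⟨w, ⟨hw, hctr⟩, rfl⟩
  choose vF UF hUo hUm hU1 hU2 using hloc
  have hcover : S ⊆ ⋃ i : S, UF i.1 i.2 := by
    intro y hy
    exact Set.mem_iUnion.mpr ⟨⟨y, hy⟩, hUm y hy⟩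
  obtain ⟨I, hI⟩ := hS.elim_finite_subcover (fun i : S => UF i.1 i.2)
    (fun i => hUo i.1 i.2) hcover
  set U'' : {i : S // i ∈ I} → Set (Fin m → ℝ) := fun i => UF i.1.1 i.1.2 with hU''
  have hScl : IsClosed S := hS.isClosed
  have hsub : S ⊆ ⋃ i, U'' i := by
    intro y hy
    have h1 := hI hy
    rw [Set.mem_iUnion₂] at h1
    obtain ⟨i, hiI, hyi⟩ := h1
    exact Set.mem_iUnion.mpr ⟨⟨i, hiI⟩, hyi⟩
  obtain ⟨pou, hpou⟩ := PartitionOfUnity.exists_isSubordinate hScl U''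
    (fun i => hUo i.1.1 i.1.2) hsub
  set cfun : (Fin m → ℝ) → ℝ := fun y => ∑ i : {i : S // i ∈ I}, pou i y * vF i.1.1 i.1.2
    with hcfun
  have hcont : Continuous cfun :=
    continuous_finset_sum _ fun i _ => ((pou i).continuous).mul continuous_const
  have hcsum : ∀ y ∈ S, ∑ i : {i : S // i ∈ I}, pou i y = 1 := by
    intro y hy
    have := pou.sum_eq_one hy
    rwa [finsum_eq_sum_of_fintype] at this
  have hsupp : ∀ (i : {i : S // i ∈ I}) (y : Fin m → ℝ), pou i y ≠ 0 → y ∈ U'' i := by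
    intro i y hne
    exact hpou i (subset_tsupport _ hne)
  have hexpos : ∀ y ∈ S, ∃ i : {i : S // i ∈ I}, pou i y ≠ 0 := by
    intro y hy
    by_contra hctr
    push_neg at hctr
    have := hcsum y hy
    rw [Finset.sum_eq_zero (fun i _ => hctr i)] at this
    norm_num at this
  have hcb1 : ∀ w ∈ Kxy, cfun w.2 < F1 w := by
    intro w hw
    have hyS : w.2 ∈ S := Or.inl ⟨w, hw, rfl⟩
    obtain ⟨i₀, hi₀⟩ := hexpos w.2 hyS
    have hterm : ∀ i ∈ Finset.univ, pou i w.2 * vF i.1.1 i.1.2 ≤ pou i w.2 * F1 w := by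
      intro i _
      rcases eq_or_ne (pou i w.2) 0 with h0 | h0
      · rw [h0, zero_mul, zero_mul]
      · have hyU := hsupp i w.2 h0
        have hppos : 0 < pou i w.2 := lt_of_le_of_ne (pou.nonneg i w.2) (Ne.symm h0)
        exact le_of_lt (mul_lt_mul_of_pos_left (hU1 i.1.1 i.1.2 w hw hyU) hppos)
    have hstrict : pou i₀ w.2 * vF i₀.1.1 i₀.1.2 < pou i₀ w.2 * F1 w := by
      have hyU := hsupp i₀ w.2 hi₀
      have hppos : 0 < pou i₀ w.2 := lt_of_le_of_ne (pou.nonneg i₀ w.2) (Ne.symm hi₀)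
      exact mul_lt_mul_of_pos_left (hU1 i₀.1.1 i₀.1.2 w hw hyU) hppos
    calc cfun w.2 < ∑ i : {i : S // i ∈ I}, pou i w.2 * F1 w :=
          Finset.sum_lt_sum hterm ⟨i₀, Finset.mem_univ _, hstrict⟩
      _ = F1 w := by rw [← Finset.sum_mul, hcsum w.2 hyS, one_mul]
  have hcb2 : ∀ w ∈ Kyz, - F2 w < cfun w.1 := by
    intro w hw
    have hyS : w.1 ∈ S := Or.inr ⟨w, hw, rfl⟩
    obtain ⟨i₀, hi₀⟩ := hexpos w.1 hyS
    have hterm : ∀ i ∈ Finset.univ, pou i w.1 * (- F2 w) ≤ pou i w.1 * vF i.1.1 i.1.2 := by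
      intro i _
      rcases eq_or_ne (pou i w.1) 0 with h0 | h0
      · rw [h0, zero_mul, zero_mul]
      · have hyU := hsupp i w.1 h0
        have hppos : 0 < pou i w.1 := lt_of_le_of_ne (pou.nonneg i w.1) (Ne.symm h0)
        exact le_of_lt (mul_lt_mul_of_pos_left (hU2 i.1.1 i.1.2 w hw hyU) hppos)
    have hstrict : pou i₀ w.1 * (- F2 w) < pou i₀ w.1 * vF i₀.1.1 i₀.1.2 := by
      have hyU := hsupp i₀ w.1 hi₀
      have hppos : 0 < pou i₀ w.1 := lt_of_le_of_ne (pou.nonneg i₀ w.1) (Ne.symm hi₀)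
      exact mul_lt_mul_of_pos_left (hU2 i₀.1.1 i₀.1.2 w hw hyU) hppos
    calc - F2 w = ∑ i : {i : S // i ∈ I}, pou i w.1 * (- F2 w) := by
          rw [← Finset.sum_mul, hcsum w.1 hyS, one_mul]
      _ < cfun w.1 := Finset.sum_lt_sum hterm ⟨i₀, Finset.mem_univ _, hstrict⟩
  obtain ⟨δ₁, hδ₁, hgap1⟩ := posGap hKxy
    ((hF1.sub (hcont.comp continuous_snd)).continuousOn)
    (fun w hw => sub_pos.mpr (hcb1 w hw))
  obtain ⟨δ₂, hδ₂, hgap2⟩ := posGap hKyz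
    (((hcont.comp continuous_fst).add hF2).continuousOn)
    (fun w hw => by have := hcb2 w hw; show (0:ℝ) < cfun w.1 + F2 w; linarith)
  have hεpos : 0 < min δ₁ δ₂ / 2 := by positivity
  obtain ⟨q, hq⟩ := sw_approx hS cfun hcont hεpos
  refine ⟨q, ?_, ?_⟩
  · intro w hw
    have h1 := hq w.2 (Or.inl ⟨w, hw, rfl⟩)
    have h2 : δ₁ ≤ F1 w - cfun w.2 := hgap1 w hw
    have h3 := abs_lt.mp h1
    have h4 : min δ₁ δ₂ ≤ δ₁ := min_le_left _ _
    linarith [h3.2]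
  · intro w hw
    have h1 := hq w.1 (Or.inr ⟨w, hw, rfl⟩)
    have h2 : δ₂ ≤ cfun w.1 + F2 w := hgap2 w hw
    have h3 := abs_lt.mp h1
    have h4 : min δ₁ δ₂ ≤ δ₂ := min_le_right _ _
    linarith [h3.1]

end KVAux

open KVAux

theorem specialized_krivine_vasilescu
    (n m p a b : ℕ)
    (g : Fin a → MvPolynomial (Fin n ⊕ Fin m) ℝ)
    (h : Fin b → MvPolynomial (Fin m ⊕ Fin p) ℝ)
    (Kxy : Set ((Fin n → ℝ) × (Fin m → ℝ)))
    (Kyz : Set ((Fin m → ℝ) × (Fin p → ℝ)))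
    (K : Set ((Fin n → ℝ) × (Fin m → ℝ) × (Fin p → ℝ)))
    (hKxy : Kxy = {w | ∀ j, 0 ≤ eval (Sum.elim w.1 w.2) (g j)})
    (hKyz : Kyz = {w | ∀ k, 0 ≤ eval (Sum.elim w.1 w.2) (h k)})
    (hK : K = {w | (w.1, w.2.1) ∈ Kxy ∧ w.2 ∈ Kyz})
    (hKxyCompact : IsCompact Kxy) (hKyzCompact : IsCompact Kyz)
    (hKint : (interior K).Nonempty)
    -- normalization: `0 ≤ g_j ≤ 1` on `K_xy` and `0 ≤ h_k ≤ 1` on `K_yz`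
    (hgnorm : ∀ j, ∀ w ∈ Kxy,
      0 ≤ eval (Sum.elim w.1 w.2) (g j) ∧ eval (Sum.elim w.1 w.2) (g j) ≤ 1)
    (hhnorm : ∀ k, ∀ w ∈ Kyz,
      0 ≤ eval (Sum.elim w.1 w.2) (h k) ∧ eval (Sum.elim w.1 w.2) (h k) ≤ 1)
    -- the families `{0, 1, g_j}` and `{0, 1, h_k}` generate the respective algebras
    (hggen : Algebra.adjoin ℝ (insert (0 : MvPolynomial (Fin n ⊕ Fin m) ℝ)
      (insert 1 (Set.range g))) = ⊤)
    (hhgen : Algebra.adjoin ℝ (insert (0 : MvPolynomial (Fin m ⊕ Fin p) ℝ)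
      (insert 1 (Set.range h))) = ⊤)
    (f : MvPolynomial (Fin n ⊕ Fin m ⊕ Fin p) ℝ)
    (f₁ : MvPolynomial (Fin n ⊕ Fin m) ℝ) (f₂ : MvPolynomial (Fin m ⊕ Fin p) ℝ)
    (hf : f = rename (Sum.map id Sum.inl) f₁ + rename Sum.inr f₂)
    (hpos : ∀ w ∈ K, 0 < eval (Sum.elim w.1 (Sum.elim w.2.1 w.2.2)) f) :
    ∃ (σ : MvPolynomial (Fin n ⊕ Fin m) ℝ) (ψ : MvPolynomial (Fin m ⊕ Fin p) ℝ),
      InCone g σ ∧ InCone h ψ ∧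
      f = rename (Sum.map id Sum.inl) σ + rename Sum.inr ψ := by
  classical
  set E1 : (Fin n → ℝ) × (Fin m → ℝ) → ℝ := fun w => eval (Sum.elim w.1 w.2) f₁ with hE1
  set E2 : (Fin m → ℝ) × (Fin p → ℝ) → ℝ := fun w => eval (Sum.elim w.1 w.2) f₂ with hE2
  have hcontelim1 : Continuous (fun w : (Fin n → ℝ) × (Fin m → ℝ) => Sum.elim w.1 w.2) := by
    apply continuous_pi
    intro s
    cases s with
    | inl i => exact (continuous_apply i).comp continuous_fst
    | inr i => exact (continuous_apply i).comp continuous_snd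
  have hcontelim2 : Continuous (fun w : (Fin m → ℝ) × (Fin p → ℝ) => Sum.elim w.1 w.2) := by
    apply continuous_pi
    intro s
    cases s with
    | inl i => exact (continuous_apply i).comp continuous_fst
    | inr i => exact (continuous_apply i).comp continuous_snd
  have hE1c : Continuous E1 := (MvPolynomial.continuous_eval (p := f₁)).comp hcontelim1
  have hE2c : Continuous E2 := (MvPolynomial.continuous_eval (p := f₂)).comp hcontelim2
  have hpos' : ∀ w1 ∈ Kxy, ∀ w2 ∈ Kyz, w1.2 = w2.1 → 0 < E1 w1 + E2 w2 := by
    intro w1 hw1 w2 hw2 heq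
    have hw2' : ((w1.2, w2.2) : (Fin m → ℝ) × (Fin p → ℝ)) = w2 := by
      rw [heq]
    have hmem : ((w1.1, (w1.2, w2.2)) : (Fin n → ℝ) × (Fin m → ℝ) × (Fin p → ℝ)) ∈ K := by
      rw [hK]
      constructor
      · show (w1.1, w1.2) ∈ Kxy
        simpa using hw1
      · show ((w1.2, w2.2) : (Fin m → ℝ) × (Fin p → ℝ)) ∈ Kyz
        rw [hw2']
        exact hw2
    have hp := hpos _ hmem
    have hsplit : eval (Sum.elim w1.1 (Sum.elim w1.2 w2.2)) f
        = E1 (w1.1, w1.2) + E2 (w1.2, w2.2) := by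
      rw [hf, map_add, eval_rename, eval_rename]
      have hc1 : (Sum.elim w1.1 (Sum.elim w1.2 w2.2)) ∘ (Sum.map id Sum.inl)
          = Sum.elim w1.1 w1.2 := by
        funext s
        cases s with
        | inl i => rfl
        | inr i => rfl
      have hc2 : (Sum.elim w1.1 (Sum.elim w1.2 w2.2)) ∘ (Sum.inr : Fin m ⊕ Fin p → _)
          = Sum.elim w1.2 w2.2 := by
        funext s
        cases s with
        | inl i => rfl
        | inr i => rfl
      rw [hc1, hc2]
    have hE1eq : E1 (w1.1, w1.2) = E1 w1 := by rw [Prod.mk.eta]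
    have hE2eq : E2 (w1.2, w2.2) = E2 w2 := by rw [hw2']
    rw [hsplit, hE1eq, hE2eq] at hp
    exact hp
  obtain ⟨q, hq1, hq2⟩ := exists_transfer_poly Kxy Kyz hKxyCompact hKyzCompact
    E1 E2 hE1c hE2c hpos'
  have hggen' : Algebra.adjoin ℝ (Set.range g) = ⊤ := by
    refine top_unique ?_
    rw [← hggen]
    refine Algebra.adjoin_le ?_
    refine Set.insert_subset_iff.mpr ⟨Subalgebra.zero_mem _, ?_⟩
    refine Set.insert_subset_iff.mpr ⟨Subalgebra.one_mem _, Algebra.subset_adjoin⟩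
  have hhgen' : Algebra.adjoin ℝ (Set.range h) = ⊤ := by
    refine top_unique ?_
    rw [← hhgen]
    refine Algebra.adjoin_le ?_
    refine Set.insert_subset_iff.mpr ⟨Subalgebra.zero_mem _, ?_⟩
    refine Set.insert_subset_iff.mpr ⟨Subalgebra.one_mem _, Algebra.subset_adjoin⟩
  set σ : MvPolynomial (Fin n ⊕ Fin m) ℝ := f₁ - rename Sum.inr q with hσdef
  set ψ : MvPolynomial (Fin m ⊕ Fin p) ℝ := f₂ + rename Sum.inl q with hψdef
  have hσ : InCone g σ := by
    apply krivine g hggen'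
    intro w hw
    have helim : Sum.elim (w ∘ Sum.inl) (w ∘ Sum.inr) = w := by
      funext s
      cases s with
      | inl i => rfl
      | inr i => rfl
    have hwmem : ((w ∘ Sum.inl, w ∘ Sum.inr) : (Fin n → ℝ) × (Fin m → ℝ)) ∈ Kxy := by
      rw [hKxy]
      intro j
      show 0 ≤ eval (Sum.elim (w ∘ Sum.inl) (w ∘ Sum.inr)) (g j)
      rw [helim]
      exact hw j
    have hlt := hq1 _ hwmem
    have hE1w : E1 (w ∘ Sum.inl, w ∘ Sum.inr) = eval w f₁ := by
      show eval (Sum.elim (w ∘ Sum.inl) (w ∘ Sum.inr)) f₁ = eval w f₁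
      rw [helim]
    have hvalσ : eval w σ = eval w f₁ - eval (w ∘ Sum.inr) q := by
      rw [hσdef, map_sub, eval_rename]
    rw [hvalσ]
    rw [hE1w] at hlt
    have : eval ((w ∘ Sum.inl, w ∘ Sum.inr) : (Fin n → ℝ) × (Fin m → ℝ)).2 q
        = eval (w ∘ Sum.inr) q := rfl
    linarith [hlt]
  have hψ : InCone h ψ := by
    apply krivine h hhgen'
    intro w hw
    have helim : Sum.elim (w ∘ Sum.inl) (w ∘ Sum.inr) = w := by
      funext s
      cases s with
      | inl i => rfl
      | inr i => rfl
    have hwmem : ((w ∘ Sum.inl, w ∘ Sum.inr) : (Fin m → ℝ) × (Fin p → ℝ)) ∈ Kyz := by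
      rw [hKyz]
      intro k
      show 0 ≤ eval (Sum.elim (w ∘ Sum.inl) (w ∘ Sum.inr)) (h k)
      rw [helim]
      exact hw k
    have hlt := hq2 _ hwmem
    have hE2w : E2 (w ∘ Sum.inl, w ∘ Sum.inr) = eval w f₂ := by
      show eval (Sum.elim (w ∘ Sum.inl) (w ∘ Sum.inr)) f₂ = eval w f₂
      rw [helim]
    have hvalψ : eval w ψ = eval w f₂ + eval (w ∘ Sum.inl) q := by
      rw [hψdef, map_add, eval_rename]
    rw [hvalψ]
    rw [hE2w] at hlt
    linarith [hlt]
  refine ⟨σ, ψ, hσ, hψ, ?_⟩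
  rw [hσdef, hψdef, map_sub, map_add, rename_rename, rename_rename, hf]
  have hfun : ((Sum.map id Sum.inl) ∘ (Sum.inr : Fin m → Fin n ⊕ Fin m) :
      Fin m → Fin n ⊕ (Fin m ⊕ Fin p))
      = ((Sum.inr : Fin m ⊕ Fin p → Fin n ⊕ (Fin m ⊕ Fin p)) ∘ (Sum.inl : Fin m → Fin m ⊕ Fin p)) := by
    funext y
    rfl
  rw [hfun]
  ring
end
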